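/- arXiv:1006.2958 — 7 statements merged into one kernel-verified Lean document; each statement's English description precedes it below -/
import Mathlib

section
/- Let P be the path on vertices v_0,...,v_n. Let ω : V → ℕ be a weight function and L a 'waterfall' list assignment (i.e., L(i) ∩ L(j) = ∅ whenever |i−j| ≥ 2). Then there exists an assignment c with c(i) ⊆ L(i), |c(i)| = ω(i) and c(i) ∩ c(i+1) = ∅ for all i, if and only if for all 0 ≤ i ≤ j ≤ n the amplitude satisfies |⋃_{k=i}^{j} L(k)| ≥ Σ_{k=i}^{j} ω(k). -/
/-- `P_{n+1}` is `(L,ω)`-choosable: each vertex `i ∈ {0,…,n}` gets `c i ⊆ L i`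
with `|c i| = ω i` and consecutive chosen sets disjoint. -/
def PathChoosable (n : ℕ) (L : ℕ → Finset ℕ) (ω : ℕ → ℕ) : Prop :=
  ∃ c : ℕ → Finset ℕ, (∀ i ≤ n, c i ⊆ L i ∧ (c i).card = ω i) ∧
    ∀ i, i < n → Disjoint (c i) (c (i + 1))

/-- `L` is a waterfall list on `{0,…,n}`: lists at distance `≥ 2` are disjoint. -/
def Waterfall (n : ℕ) (L : ℕ → Finset ℕ) : Prop :=
  ∀ i ≤ n, ∀ j ≤ n, i + 2 ≤ j → Disjoint (L i) (L j)

/-!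
Necessity: the chosen sets on `v_i, …, v_j` are pairwise disjoint (consecutive ones by the
colouring, distant ones because their lists are), so they fit inside the amplitude.

Sufficiency is greedy from the left. Give `v_0` any `ω 0` colours of `L 0`, but use colours
outside `L 1` first, then delete them from `L 1` and recurse on `v_1, …, v_n`. By the waterfall
property the deleted colours only affect amplitudes starting at `v_1`; for those, either nothing
was deleted, or all of `L 0 \ L 1` was used, and then the amplitude bound on `v_0, …, v_j` pays
for the loss.
-/

open Finset

def AmplitudeBound (n : ℕ) (L : ℕ → Finset ℕ) (ω : ℕ → ℕ) : Prop :=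
  ∀ i j, i ≤ j → j ≤ n → ∑ k ∈ Icc i j, ω k ≤ #((Icc i j).biUnion L)

theorem Finset.exists_subset_card_eq_disjoint_or_sdiff_subset {α : Type*} [DecidableEq α]
    {s : Finset α} (u : Finset α) {m : ℕ} (hm : m ≤ #s) :
    ∃ c ⊆ s, #c = m ∧ (Disjoint c u ∨ s \ u ⊆ c) := by
  rcases le_total m #(s \ u) with h | h
  · obtain ⟨c, hcs, hc⟩ := exists_subset_card_eq h
    exact ⟨c, hcs.trans sdiff_subset, hc, Or.inl (disjoint_of_subset_left hcs sdiff_disjoint)⟩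
  · obtain ⟨c, hsc, hcs, hc⟩ := exists_subsuperset_card_eq sdiff_subset h hm
    exact ⟨c, hcs, hc, Or.inr hsc⟩

theorem Finset.biUnion_Icc_eq_union {α : Type*} [DecidableEq α] (f : ℕ → Finset α) {i j : ℕ}
    (hij : i ≤ j) : (Icc i j).biUnion f = f i ∪ (Icc (i + 1) j).biUnion f := by
  rw [← insert_Icc_add_one_left_eq_Icc hij, biUnion_insert]

theorem Finset.sum_Icc_eq_add {M : Type*} [AddCommMonoid M] (f : ℕ → M) {i j : ℕ}
    (hij : i ≤ j) : ∑ k ∈ Icc i j, f k = f i + ∑ k ∈ Icc (i + 1) j, f k := by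
  rw [← insert_Icc_add_one_left_eq_Icc hij, sum_insert (by simp)]

theorem Finset.biUnion_Icc_add_one_sdiff {α : Type*} [DecidableEq α] (f : ℕ → Finset α)
    (t : Finset α) (i j : ℕ) :
    (Icc i j).biUnion (fun k => f (k + 1) \ t) = (Icc (i + 1) (j + 1)).biUnion f \ t := by
  rw [← image_add_right_Icc, image_biUnion]
  ext x
  simp only [mem_biUnion, mem_sdiff, ← and_assoc, exists_and_right]

theorem Finset.sum_Icc_add_one {M : Type*} [AddCommMonoid M] (f : ℕ → M) (i j : ℕ) :
    ∑ k ∈ Icc i j, f (k + 1) = ∑ k ∈ Icc (i + 1) (j + 1), f k := by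
  rw [← image_add_right_Icc, sum_image fun _ _ _ _ => Nat.add_right_cancel]

section Path

variable {n : ℕ} {L : ℕ → Finset ℕ} {ω : ℕ → ℕ}

theorem Waterfall.disjoint_biUnion (hw : Waterfall n L) {i k j : ℕ} (hik : i + 2 ≤ k)
    (hjn : j ≤ n) : Disjoint (L i) ((Icc k j).biUnion L) := by
  refine (disjoint_biUnion_right _ _ _).2 fun l hl => ?_
  obtain ⟨hkl, hlj⟩ := mem_Icc.1 hl
  exact hw i (by omega) l (by omega) (by omega)

theorem Waterfall.tail_sdiff (hw : Waterfall (n + 1) L) (t : Finset ℕ) :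
    Waterfall n (fun k => L (k + 1) \ t) :=
  fun i hi j hj hij => (hw (i + 1) (by omega) (j + 1) (by omega) (by omega)).mono
    sdiff_subset sdiff_subset

theorem PathChoosable.amplitudeBound (hw : Waterfall n L) (h : PathChoosable n L ω) :
    AmplitudeBound n L ω := by
  obtain ⟨c, hcL, hadj⟩ := h
  intro i j hij hjn
  have hdisj : ∀ a b, a < b → b ≤ n → Disjoint (c a) (c b) := by
    intro a b hab hbn
    obtain rfl | hab2 := (Nat.succ_le_of_lt hab).eq_or_lt
    · exact hadj a (by omega)
    · exact (hw a (by omega) b hbn hab2).mono (hcL a (by omega)).1 (hcL b hbn).1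
  have hpair : (Icc i j : Set ℕ).PairwiseDisjoint c := by
    intro a ha b hb hab
    simp only [coe_Icc, Set.mem_Icc] at ha hb
    rcases hab.lt_or_gt with h | h
    · exact hdisj a b h (by omega)
    · exact (hdisj b a h (by omega)).symm
  have hcL' : ∀ k ∈ Icc i j, c k ⊆ L k ∧ #(c k) = ω k := fun k hk =>
    hcL k ((mem_Icc.1 hk).2.trans hjn)
  calc ∑ k ∈ Icc i j, ω k = ∑ k ∈ Icc i j, #(c k) := sum_congr rfl fun k hk => (hcL' k hk).2.symm
    _ = #((Icc i j).biUnion c) := (card_biUnion hpair).symm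
    _ ≤ #((Icc i j).biUnion L) := card_le_card (biUnion_mono fun k hk => (hcL' k hk).1)

theorem PathChoosable.cons {c₀ : Finset ℕ} (hc₀L : c₀ ⊆ L 0) (hc₀ : #c₀ = ω 0)
    (h : PathChoosable n (fun k => L (k + 1) \ c₀) (fun k => ω (k + 1))) :
    PathChoosable (n + 1) L ω := by
  obtain ⟨c, hcL, hadj⟩ := h
  refine ⟨fun | 0 => c₀ | k + 1 => c k, ?_, ?_⟩
  · rintro (_ | k) hk
    · exact ⟨hc₀L, hc₀⟩
    · obtain ⟨hsub, hcard⟩ := hcL k (by omega)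
      exact ⟨hsub.trans sdiff_subset, hcard⟩
  · rintro (_ | k) hk
    · exact disjoint_of_subset_right (hcL 0 (by omega)).1 disjoint_sdiff
    · exact hadj k (by omega)

theorem AmplitudeBound.tail_sdiff (hw : Waterfall (n + 1) L) (hA : AmplitudeBound (n + 1) L ω)
    {c₀ : Finset ℕ} (hc₀L : c₀ ⊆ L 0) (hc₀ : #c₀ = ω 0)
    (hc₀L₁ : Disjoint c₀ (L 1) ∨ L 0 \ L 1 ⊆ c₀) :
    AmplitudeBound n (fun k => L (k + 1) \ c₀) (fun k => ω (k + 1)) := by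
  intro i j hij hjn
  rw [biUnion_Icc_add_one_sdiff, sum_Icc_add_one]
  have hfar : ∀ k, 2 ≤ k → Disjoint c₀ ((Icc k (j + 1)).biUnion L) := fun k hk =>
    (hw.disjoint_biUnion (by omega) (by omega)).mono_left hc₀L
  rcases Nat.eq_zero_or_pos i with rfl | hi
  · rw [zero_add]
    have hsplit := biUnion_Icc_eq_union L (by omega : 1 ≤ j + 1)
    rcases hc₀L₁ with hnear | hsub
    · have hdisj : Disjoint c₀ ((Icc 1 (j + 1)).biUnion L) :=
        hsplit ▸ disjoint_union_right.2 ⟨hnear, hfar 2 le_rfl⟩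
      rw [hdisj.symm.sdiff_eq_left]
      exact hA 1 (j + 1) (by omega) (by omega)
    · have hL₀ : L 0 ⊆ (Icc 1 (j + 1)).biUnion L ∪ c₀ := (sdiff_le_iff.1 hsub).trans
        (union_subset_union_left (subset_biUnion_of_mem L (by simp)))
      have hcover : #(L 0 ∪ (Icc 1 (j + 1)).biUnion L) ≤
          #((Icc 1 (j + 1)).biUnion L \ c₀) + #c₀ := by
        rw [card_sdiff_add_card]
        exact card_le_card (union_subset hL₀ subset_union_left)
      have h0 := hA 0 (j + 1) (by omega) (by omega)
      rw [biUnion_Icc_eq_union L (by omega), sum_Icc_eq_add ω (by omega), zero_add] at h0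
      omega
  · rw [(hfar (i + 1) (by omega)).symm.sdiff_eq_left]
    exact hA (i + 1) (j + 1) (by omega) (by omega)

theorem AmplitudeBound.pathChoosable (hw : Waterfall n L) (hA : AmplitudeBound n L ω) :
    PathChoosable n L ω := by
  induction n generalizing L ω with
  | zero =>
    obtain ⟨c₀, hc₀L, hc₀⟩ := exists_subset_card_eq (by simpa using hA 0 0 le_rfl le_rfl)
    refine ⟨fun _ => c₀, fun i hi => ?_, fun i hi => absurd hi (Nat.not_lt_zero i)⟩
    obtain rfl : i = 0 := Nat.le_zero.1 hi
    exact ⟨hc₀L, hc₀⟩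
  | succ n ih =>
    obtain ⟨c₀, hc₀L, hc₀, hc₀L₁⟩ := exists_subset_card_eq_disjoint_or_sdiff_subset (L 1)
      (by simpa using hA 0 0 le_rfl (by omega))
    exact PathChoosable.cons hc₀L hc₀
      (ih (hw.tail_sdiff c₀) (hA.tail_sdiff hw hc₀L hc₀ hc₀L₁))

end Path

theorem waterfall_choosable_iff_amplitude (n : ℕ) (L : ℕ → Finset ℕ) (ω : ℕ → ℕ)
    (hw : Waterfall n L) :
    PathChoosable n L ω ↔
      ∀ i j, i ≤ j → j ≤ n →
        ((Finset.Icc i j).biUnion L).card ≥ ∑ k ∈ Finset.Icc i j, ω k :=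
  ⟨fun h => h.amplitudeBound hw, AmplitudeBound.pathChoosable hw⟩
end

section
/- Let b ≥ 1, e ≥ 1, a = 2b + e, and let L be a list assignment on the path v_0,...,v_n with |L(0)| = |L(n)| = b and |L(i)| = a for all 1 ≤ i ≤ n−1. If n is at least the smallest even integer ≥ 2b/e, then P is (L,b)-choosable, i.e., there exists c with c(i) ⊆ L(i), |c(i)| = b, and c(i) ∩ c(i+1) = ∅ for all i. -/
/-- The smallest even integer `≥ 2b/e` (for `e ≥ 1`), namely `2⌈b/e⌉`. -/
def evenCeil (b e : ℕ) : ℕ := 2 * ((b + e - 1) / e)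

/-- Backward constraint data: at vertex `n - t`, the chosen set must contain at least
`(auxBK L n b t).2` elements of `(auxBK L n b t).1`. -/
def auxBK (L : ℕ → Finset ℕ) (n b : ℕ) : ℕ → Finset ℕ × ℕ
  | 0 => (L n, b)
  | t+1 =>
      if (auxBK L n b t).2 + b ≤ (auxBK L n b t).1.card then
        (L (n-(t+1)), 0)
      else
        (L (n-(t+1)) \ (auxBK L n b t).1,
          (auxBK L n b t).2 + b - (auxBK L n b t).1.card)

/-- Forward greedy choice. -/
noncomputable def auxD (L : ℕ → Finset ℕ) (b : ℕ) : ℕ → Finset ℕ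
  | 0 => L 0
  | i+1 => if h : b ≤ (L (i+1) \ auxD L b i).card then
      (Finset.exists_subset_card_eq h).choose else ∅

lemma auxBK_succ (L : ℕ → Finset ℕ) (n b t : ℕ) :
    auxBK L n b (t+1) =
      if (auxBK L n b t).2 + b ≤ (auxBK L n b t).1.card then
        (L (n-(t+1)), 0)
      else
        (L (n-(t+1)) \ (auxBK L n b t).1,
          (auxBK L n b t).2 + b - (auxBK L n b t).1.card) := by
  rw [auxBK]

lemma auxBK_subset (L : ℕ → Finset ℕ) (n b : ℕ) :
    ∀ t, (auxBK L n b t).1 ⊆ L (n - t) := by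
  intro t
  cases t with
  | zero => simp [auxBK]
  | succ s =>
      rw [auxBK_succ]
      split
      · exact Finset.Subset.refl _
      · exact Finset.sdiff_subset

lemma auxBK_inv (n a b e : ℕ) (hb : 1 ≤ b) (he : 1 ≤ e)
    (ha : a = 2 * b + e) (L : ℕ → Finset ℕ) (hn : (L n).card = b)
    (hmid : ∀ i, 1 ≤ i → i ≤ n - 1 → (L i).card = a) :
    ∀ t, t ≤ n - 1 →
      (auxBK L n b t).2 ≤ (auxBK L n b t).1.card ∧ (auxBK L n b t).2 ≤ b := by
  intro t
  induction t with
  | zero => intro _; simp [auxBK, hn]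
  | succ t IH =>
      intro ht
      have IH' := IH (by omega)
      by_cases hres : (auxBK L n b t).2 + b ≤ (auxBK L n b t).1.card
      · have hB : (auxBK L n b (t+1)).1 = L (n-(t+1)) := by
          rw [auxBK_succ, if_pos hres]
        have hk : (auxBK L n b (t+1)).2 = 0 := by
          rw [auxBK_succ, if_pos hres]
        rw [hB, hk]
        exact ⟨Nat.zero_le _, Nat.zero_le _⟩
      · have hB : (auxBK L n b (t+1)).1 = L (n-(t+1)) \ (auxBK L n b t).1 := by
          rw [auxBK_succ, if_neg hres]
        have hk : (auxBK L n b (t+1)).2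
            = (auxBK L n b t).2 + b - (auxBK L n b t).1.card := by
          rw [auxBK_succ, if_neg hres]
        rw [hB, hk]
        have hv : (L (n - (t+1))).card = 2 * b + e := by
          rw [hmid (n - (t+1)) (by omega) (by omega)]; omega
        have h1 := Finset.card_sdiff_add_card_inter (L (n - (t+1))) (auxBK L n b t).1
        have h2 : (L (n - (t+1)) ∩ (auxBK L n b t).1).card ≤ (auxBK L n b t).1.card :=
          Finset.card_le_card Finset.inter_subset_right
        exact ⟨by omega, by omega⟩

lemma auxBK_dec (n a b e : ℕ) (hb : 1 ≤ b) (he : 1 ≤ e)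
    (ha : a = 2 * b + e) (L : ℕ → Finset ℕ) (hn : (L n).card = b)
    (hmid : ∀ i, 1 ≤ i → i ≤ n - 1 → (L i).card = a) :
    ∀ j, 2 * j ≤ n → (auxBK L n b (2 * j)).2 ≤ b - j * e := by
  intro j
  induction j with
  | zero => intro _; simp [auxBK]
  | succ j IH =>
      intro hj
      have IH' := IH (by omega)
      have hmul : (j + 1) * e = j * e + e := by ring
      have ht2 : 2 * (j + 1) = 2 * j + 1 + 1 := by omega
      rw [ht2, hmul]
      have hv1 : (L (n - (2 * j + 1))).card = 2 * b + e := by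
        rw [hmid (n - (2 * j + 1)) (by omega) (by omega)]; omega
      by_cases hres1 : (auxBK L n b (2 * j)).2 + b ≤ (auxBK L n b (2 * j)).1.card
      · -- reset at level 2j+1
        have hB1 : (auxBK L n b (2 * j + 1)).1 = L (n-(2 * j + 1)) := by
          rw [auxBK_succ, if_pos hres1]
        have hk1 : (auxBK L n b (2 * j + 1)).2 = 0 := by
          rw [auxBK_succ, if_pos hres1]
        have hres2 : (auxBK L n b (2 * j + 1)).2 + b ≤ (auxBK L n b (2 * j + 1)).1.card := by
          rw [hB1, hk1]; omega
        have hk2 : (auxBK L n b (2 * j + 1 + 1)).2 = 0 := by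
          rw [auxBK_succ, if_pos hres2]
        rw [hk2]
        exact Nat.zero_le _
      · have hB1 : (auxBK L n b (2 * j + 1)).1 = L (n-(2 * j + 1)) \ (auxBK L n b (2 * j)).1 := by
          rw [auxBK_succ, if_neg hres1]
        have hk1 : (auxBK L n b (2 * j + 1)).2
            = (auxBK L n b (2 * j)).2 + b - (auxBK L n b (2 * j)).1.card := by
          rw [auxBK_succ, if_neg hres1]
        by_cases hres2 : (auxBK L n b (2 * j + 1)).2 + b ≤ (auxBK L n b (2 * j + 1)).1.card
        · have hk2 : (auxBK L n b (2 * j + 1 + 1)).2 = 0 := by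
            rw [auxBK_succ, if_pos hres2]
          rw [hk2]
          exact Nat.zero_le _
        · have hk2 : (auxBK L n b (2 * j + 1 + 1)).2
              = (auxBK L n b (2 * j + 1)).2 + b - (auxBK L n b (2 * j + 1)).1.card := by
            rw [auxBK_succ, if_neg hres2]
          rw [hk2, hk1, hB1]
          have h1 := Finset.card_sdiff_add_card_inter (L (n - (2 * j + 1))) (auxBK L n b (2 * j)).1
          have h2 : (L (n - (2 * j + 1)) ∩ (auxBK L n b (2 * j)).1).card
              ≤ (auxBK L n b (2 * j)).1.card :=
            Finset.card_le_card Finset.inter_subset_right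
          omega

lemma auxBK_ext (n a b e : ℕ) (hb : 1 ≤ b) (he : 1 ≤ e)
    (ha : a = 2 * b + e) (L : ℕ → Finset ℕ) (hn : (L n).card = b)
    (hmid : ∀ i, 1 ≤ i → i ≤ n - 1 → (L i).card = a) :
    ∀ t, t ≤ n → ∀ S, S ⊆ L (n - t) → S.card = b →
      (auxBK L n b t).2 ≤ (S ∩ (auxBK L n b t).1).card →
      ∃ c : ℕ → Finset ℕ, c (n - t) = S ∧
        (∀ i, n - t ≤ i → i ≤ n → c i ⊆ L i ∧ (c i).card = b) ∧
        (∀ i, n - t ≤ i → i < n → Disjoint (c i) (c (i + 1))) := by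
  intro t
  induction t with
  | zero =>
      intro _ S hS hcard _
      refine ⟨fun _ => S, rfl, ?_, ?_⟩
      · intro i hi1 hi2
        have : i = n := by omega
        subst this
        exact ⟨hS, hcard⟩
      · intro i hi1 hi2
        omega
  | succ t IH =>
      intro hT S hS hcard hk
      have htn : t ≤ n - 1 := by omega
      have hv1 : (n - (t + 1)) + 1 = n - t := by omega
      -- Step 1: (auxBK t).2 ≤ (Bt \ S).card
      have hclaim : (auxBK L n b t).2 ≤ ((auxBK L n b t).1 \ S).card := by
        by_cases hres : (auxBK L n b t).2 + b ≤ (auxBK L n b t).1.card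
        · have := Finset.le_card_sdiff S (auxBK L n b t).1
          omega
        · have hB : (auxBK L n b (t+1)).1 = L (n-(t+1)) \ (auxBK L n b t).1 := by
            rw [auxBK_succ, if_neg hres]
          have hkv : (auxBK L n b (t+1)).2
              = (auxBK L n b t).2 + b - (auxBK L n b t).1.card := by
            rw [auxBK_succ, if_neg hres]
          rw [hB, hkv] at hk
          have hinter : S ∩ (L (n-(t+1)) \ (auxBK L n b t).1) = S \ (auxBK L n b t).1 := by
            ext x
            simp only [Finset.mem_inter, Finset.mem_sdiff]
            exact ⟨fun h => ⟨h.1, h.2.2⟩, fun h => ⟨h.1, hS h.1, h.2⟩⟩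
          rw [hinter] at hk
          have h1 := Finset.card_inter_add_card_sdiff S (auxBK L n b t).1
          have h2 := Finset.card_inter_add_card_sdiff (auxBK L n b t).1 S
          have h3 : (S ∩ (auxBK L n b t).1).card = ((auxBK L n b t).1 ∩ S).card := by
            rw [Finset.inter_comm]
          omega
      have hkb : (auxBK L n b t).2 ≤ b := (auxBK_inv n a b e hb he ha L hn hmid t htn).2
      obtain ⟨K, hK1, hK2⟩ := Finset.exists_subset_card_eq hclaim
      have hBtL : (auxBK L n b t).1 ⊆ L (n - t) := auxBK_subset L n b t
      have hKL : K ⊆ L (n - t) \ S := by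
        intro x hx
        have := hK1 hx
        rw [Finset.mem_sdiff] at this ⊢
        exact ⟨hBtL this.1, this.2⟩
      have hcardL : b ≤ (L (n - t) \ S).card := by
        cases t with
        | zero =>
            have hB0 : (auxBK L n b 0).1 = L n := rfl
            have hk0 : (auxBK L n b 0).2 = b := rfl
            rw [hB0, hk0] at hclaim
            simpa using hclaim
        | succ s =>
            have hv : (L (n - (s+1))).card = 2 * b + e := by
              rw [hmid (n - (s+1)) (by omega) (by omega)]; omega
            have := Finset.le_card_sdiff S (L (n - (s+1)))
            omega
      obtain ⟨S', hS'1, hS'2, hS'3⟩ :=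
        Finset.exists_subsuperset_card_eq hKL (by omega) hcardL
      have hS'sub : S' ⊆ L (n - t) := hS'2.trans (Finset.sdiff_subset)
      have hS'k : (auxBK L n b t).2 ≤ (S' ∩ (auxBK L n b t).1).card := by
        have hKsub : K ⊆ S' ∩ (auxBK L n b t).1 := by
          intro x hx
          exact Finset.mem_inter.mpr ⟨hS'1 hx, (Finset.mem_sdiff.mp (hK1 hx)).1⟩
        have := Finset.card_le_card hKsub
        omega
      obtain ⟨c, hc0, hc1, hc2⟩ := IH (by omega) S' hS'sub hS'3 hS'k
      refine ⟨fun i => if i = n - (t+1) then S else c i, by simp, ?_, ?_⟩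
      · intro i hi1 hi2
        by_cases hiv : i = n - (t+1)
        · subst hiv
          simp only [if_pos rfl]
          exact ⟨hS, hcard⟩
        · simp only [if_neg hiv]
          exact hc1 i (by omega) hi2
      · intro i hi1 hi2
        by_cases hiv : i = n - (t+1)
        · subst hiv
          have h1 : n - (t+1) + 1 ≠ n - (t+1) := by omega
          simp only [if_pos rfl, if_neg h1]
          rw [hv1, hc0]
          rw [Finset.disjoint_left]
          intro x hx hx'
          exact (Finset.mem_sdiff.mp (hS'2 hx')).2 hx
        · have h2 : i + 1 ≠ n - (t+1) := by omega
          simp only [if_neg hiv, if_neg h2]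
          exact hc2 i (by omega) hi2

theorem path_choosable_of_long (n a b e : ℕ) (hb : 1 ≤ b) (he : 1 ≤ e)
    (ha : a = 2 * b + e) (L : ℕ → Finset ℕ)
    (h0 : (L 0).card = b) (hn : (L n).card = b)
    (hmid : ∀ i, 1 ≤ i → i ≤ n - 1 → (L i).card = a)
    (hlen : n ≥ evenCeil b e) :
    PathChoosable n L (fun _ => b) := by
  have hdm : e * ((b + e - 1) / e) + (b + e - 1) % e = b + e - 1 :=
    Nat.div_add_mod (b + e - 1) e
  have hmod : (b + e - 1) % e < e := Nat.mod_lt (b + e - 1) (by omega)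
  set m := (b + e - 1) / e with hmdef
  have hcomm : e * m = m * e := by ring
  have hme : b ≤ m * e := by omega
  have hm1 : 1 ≤ m := Nat.div_pos (by omega) (by omega)
  have hn2m : 2 * m ≤ n := by
    have heq : evenCeil b e = 2 * m := rfl
    omega
  -- k(2m) = 0
  have hdec := auxBK_dec n a b e hb he ha L hn hmid m hn2m
  have hk2m : (auxBK L n b (2 * m)).2 = 0 := by omega
  set j := n - 2 * m with hjdef
  -- forward greedy properties
  have Dprop : ∀ i, i ≤ j → auxD L b i ⊆ L i ∧ (auxD L b i).card = b := by
    intro i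
    induction i with
    | zero => intro _; exact ⟨Finset.Subset.refl _, h0⟩
    | succ i IH =>
        intro hi
        have IH' := IH (by omega)
        have hLi : (L (i+1)).card = 2 * b + e := by
          rw [hmid (i+1) (by omega) (by omega)]; omega
        have hav : b ≤ (L (i+1) \ auxD L b i).card := by
          have := Finset.le_card_sdiff (auxD L b i) (L (i+1))
          omega
        have heq : auxD L b (i+1) = (Finset.exists_subset_card_eq hav).choose := by
          simp only [auxD, dif_pos hav]
        have hspec := (Finset.exists_subset_card_eq hav).choose_spec
        rw [heq]
        exact ⟨hspec.1.trans Finset.sdiff_subset, hspec.2⟩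
  have Dsdiff : ∀ i, i + 1 ≤ j → auxD L b (i+1) ⊆ L (i+1) \ auxD L b i := by
    intro i hi
    have IH' := Dprop i (by omega)
    have hLi : (L (i+1)).card = 2 * b + e := by
      rw [hmid (i+1) (by omega) (by omega)]; omega
    have hav : b ≤ (L (i+1) \ auxD L b i).card := by
      have := Finset.le_card_sdiff (auxD L b i) (L (i+1))
      omega
    have heq : auxD L b (i+1) = (Finset.exists_subset_card_eq hav).choose := by
      simp only [auxD, dif_pos hav]
    rw [heq]
    exact (Finset.exists_subset_card_eq hav).choose_spec.1
  have Ddisj : ∀ i, i + 1 ≤ j → Disjoint (auxD L b i) (auxD L b (i+1)) := by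
    intro i hi
    rw [Finset.disjoint_left]
    intro x hx hx'
    exact (Finset.mem_sdiff.mp (Dsdiff i hi hx')).2 hx
  -- apply the extension lemma at t = 2m with S = auxD L b j
  have hjn : n - 2 * m = j := rfl
  obtain ⟨c, hc0, hc1, hc2⟩ :=
    auxBK_ext n a b e hb he ha L hn hmid (2 * m) hn2m (auxD L b j)
      ((Dprop j le_rfl).1)
      ((Dprop j le_rfl).2)
      (by rw [hk2m]; exact Nat.zero_le _)
  refine ⟨fun i => if i < j then auxD L b i else c i, ?_, ?_⟩
  · intro i hi
    by_cases h : i < j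
    · simp only [if_pos h]
      exact Dprop i (by omega)
    · simp only [if_neg h]
      exact hc1 i (by omega) hi
  · intro i hi
    by_cases h1 : i + 1 < j
    · have h0' : i < j := by omega
      simp only [if_pos h1, if_pos h0']
      exact Ddisj i (by omega)
    · by_cases h2 : i + 1 = j
      · have h0' : i < j := by omega
        simp only [if_pos h0', if_neg h1]
        have hcj : c (i + 1) = auxD L b (i+1) := by rw [h2]; exact hc0
        rw [hcj]
        exact Ddisj i (by omega)
      · have h0' : ¬ i < j := by omega
        simp only [if_neg h0', if_neg h1]
        exact hc2 i (by omega) hi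
end

section
/- Let b ≥ 1, e ≥ 1, a = 2b + e, and let L be a 1-reduced list on the path v_0,...,v_n, i.e., |L(0)| = b, |L(i)| = a for 1 ≤ i ≤ n−2, |L(n−1)| = |L(n)| = b + e, and |L(n−1) ∪ L(n)| ≥ 2b. If n equals the smallest even integer ≥ 2b/e, then P is (L,b)-choosable. -/
/-!
Color the path greedily from `v_0`, tracking at each vertex `v_i` a set `F ⊆ L i` and a threshold
`s` such that every `b`-subset of `L i` with at least `s` colors in `F` is the color set of `v_i`
in some coloring of `v_0, …, v_i`. At `v_1` take `F = L 1 \ L 0`, `s = b`. Moving to `v_{i+1}`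
through some `G ⊆ F` gives `F' = L (i+1) \ G` and threshold `s + b - |G|`; alternating
`|G| = b + e` and `|G| = b` lowers the threshold by `e` every two vertices while `|F|` stays large.
With `n = 2⌈b/e⌉` the threshold is at most `e` at `v_{n-2}`. There `|L (n-1) ∪ L n| ≥ 2b` provides
`b - e` colors of `L (n-1) \ L n`, and the color set of `v_{n-2}` can avoid them while meeting
`L (n-1)` in at most `e` colors; `v_{n-1}` takes them, leaving `b` colors of `L n` for `v_n`.
-/

open Finset

def IsListColoring (n : ℕ) (L : ℕ → Finset ℕ) (ω : ℕ → ℕ) (c : ℕ → Finset ℕ) : Prop :=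
  (∀ i ≤ n, c i ⊆ L i ∧ (c i).card = ω i) ∧ ∀ i, i < n → Disjoint (c i) (c (i + 1))

lemma IsListColoring.update_succ {n : ℕ} {L : ℕ → Finset ℕ} {ω : ℕ → ℕ} {c : ℕ → Finset ℕ}
    (hc : IsListColoring n L ω c) {C : Finset ℕ} (hCL : C ⊆ L (n + 1))
    (hCcard : C.card = ω (n + 1)) (hdisj : Disjoint (c n) C) :
    IsListColoring (n + 1) L ω (Function.update c (n + 1) C) := by
  refine ⟨fun i hi => ?_, fun i hi => ?_⟩
  · rcases Nat.lt_or_eq_of_le hi with hi | rfl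
    · rw [Function.update_of_ne (by omega)]
      exact hc.1 i (by omega)
    · rw [Function.update_self]
      exact ⟨hCL, hCcard⟩
  · rcases Nat.lt_or_eq_of_le (Nat.lt_succ_iff.mp hi) with hi | rfl
    · rw [Function.update_of_ne (by omega), Function.update_of_ne (by omega)]
      exact hc.2 i hi
    · rw [Function.update_of_ne (by omega), Function.update_self]
      exact hdisj

def Feasible (L : ℕ → Finset ℕ) (b i : ℕ) (C : Finset ℕ) : Prop :=
  ∃ c, IsListColoring i L (fun _ => b) c ∧ c i = C

def FeasibleByOverlap (L : ℕ → Finset ℕ) (b i : ℕ) (F : Finset ℕ) (s : ℕ) : Prop :=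
  F ⊆ L i ∧ ∀ C ⊆ L i, C.card = b → s ≤ (C ∩ F).card → Feasible L b i C

section

variable {L : ℕ → Finset ℕ} {b : ℕ}

lemma feasible_zero (h0 : (L 0).card = b) : Feasible L b 0 (L 0) := by
  refine ⟨fun _ => L 0, ⟨fun i _ => ⟨?_, h0⟩, fun i hi => absurd hi (Nat.not_lt_zero i)⟩, rfl⟩
  obtain rfl : i = 0 := by omega
  exact subset_rfl

lemma Feasible.succ {i : ℕ} {C C' : Finset ℕ} (hC : Feasible L b i C) (hC'L : C' ⊆ L (i + 1))
    (hC'card : C'.card = b) (hdisj : Disjoint C C') : Feasible L b (i + 1) C' := by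
  obtain ⟨c, hc, rfl⟩ := hC
  exact ⟨_, hc.update_succ hC'L hC'card hdisj, Function.update_self ..⟩

lemma Feasible.pathChoosable {n : ℕ} {C : Finset ℕ} (hC : Feasible L b n C) :
    PathChoosable n L (fun _ => b) := by
  obtain ⟨c, hc, -⟩ := hC
  exact ⟨c, hc⟩

/-- Giving `v_{p+1}` all of `R`, which misses `L (p+2)`, leaves `b` colors for `v_{p+2}`. -/
lemma Feasible.pathChoosable_add_two {p : ℕ} {C R : Finset ℕ} (hC : Feasible L b p C)
    (hR : R ⊆ L (p + 1) \ L (p + 2)) (hCR : Disjoint C R) (hRb : R.card ≤ b)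
    (h1 : b ≤ (L (p + 1) \ C).card) (h2 : 2 * b ≤ (L (p + 2)).card + R.card) :
    PathChoosable (p + 2) L (fun _ => b) := by
  have hRC : R ⊆ L (p + 1) \ C := fun x hx =>
    mem_sdiff.2 ⟨(mem_sdiff.1 (hR hx)).1, disjoint_right.1 hCR hx⟩
  obtain ⟨C1, hRC1, hC1, hC1card⟩ := exists_subsuperset_card_eq hRC hRb h1
  have hmeet : L (p + 2) ∩ C1 ⊆ C1 \ R := fun x hx =>
    mem_sdiff.2 ⟨(mem_inter.1 hx).2, fun hxR => (mem_sdiff.1 (hR hxR)).2 (mem_inter.1 hx).1⟩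
  have h2' : b ≤ (L (p + 2) \ C1).card := by
    have := card_sdiff_add_card_inter (L (p + 2)) C1
    have := card_le_card hmeet
    have := card_sdiff_of_subset hRC1
    omega
  obtain ⟨C2, hC2, hC2card⟩ := exists_subset_card_eq h2'
  have hC1' :=
    hC.succ (hC1.trans sdiff_subset) hC1card (disjoint_of_subset_right hC1 disjoint_sdiff)
  exact (hC1'.succ (hC2.trans sdiff_subset) hC2card
    (disjoint_of_subset_right hC2 disjoint_sdiff)).pathChoosable

lemma feasibleByOverlap_one (h0 : (L 0).card = b) :
    FeasibleByOverlap L b 1 (L 1 \ L 0) b := by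
  refine ⟨sdiff_subset, fun C hC hCcard hCF => (feasible_zero h0).succ hC hCcard ?_⟩
  have hCF' : C ∩ (L 1 \ L 0) = C :=
    eq_of_subset_of_card_le inter_subset_left (hCcard ▸ hCF)
  rw [← hCF']
  exact disjoint_of_subset_right inter_subset_right disjoint_sdiff

lemma FeasibleByOverlap.exists_feasible_disjoint {i s : ℕ} {F D : Finset ℕ}
    (h : FeasibleByOverlap L b i F s) (hsb : s ≤ b) (hF : s ≤ (F \ D).card)
    (hL : b ≤ (L i \ D).card) :
    ∃ C, Feasible L b i C ∧ Disjoint C D := by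
  obtain ⟨X, hX, hXcard⟩ := exists_subset_card_eq hF
  obtain ⟨C, hXC, hC, hCcard⟩ :=
    exists_subsuperset_card_eq (hX.trans (sdiff_subset_sdiff h.1 subset_rfl)) (hXcard ▸ hsb) hL
  refine ⟨C, h.2 C (hC.trans sdiff_subset) hCcard ?_, disjoint_of_subset_left hC sdiff_disjoint⟩
  calc s = X.card := hXcard.symm
    _ ≤ (C ∩ F).card := card_le_card (subset_inter hXC (hX.trans sdiff_subset))

lemma FeasibleByOverlap.succ {i s : ℕ} {F G : Finset ℕ} (h : FeasibleByOverlap L b i F s)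
    (hGF : G ⊆ F) (hsb : s ≤ b) (hL : 2 * b ≤ (L i).card) :
    FeasibleByOverlap L b (i + 1) (L (i + 1) \ G) (s + b - G.card) := by
  refine ⟨sdiff_subset, fun C' hC' hC'card hs' => ?_⟩
  -- `C'` has at least `s + b - |G|` colors outside `G`, so misses at least `s` colors of `G`.
  have hG : s ≤ (F \ C').card := by
    have hC'G : C' ∩ (L (i + 1) \ G) ⊆ C' \ G := fun x hx =>
      mem_sdiff.2 ⟨(mem_inter.1 hx).1, (mem_sdiff.1 (mem_inter.1 hx).2).2⟩
    have h1 := card_le_card hC'G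
    have h2 := card_sdiff_add_card_inter C' G
    have h3 := card_sdiff_add_card_inter G C'
    have h4 := card_le_card (sdiff_subset_sdiff hGF (subset_refl C'))
    rw [inter_comm G C'] at h3
    omega
  have hL' : b ≤ (L i \ C').card := by
    have := le_card_sdiff C' (L i)
    omega
  obtain ⟨C, hC, hCC'⟩ := h.exists_feasible_disjoint hsb hG hL'
  exact hC.succ hC' hC'card hCC'

lemma FeasibleByOverlap.exists_succ {i s g : ℕ} {F : Finset ℕ}
    (h : FeasibleByOverlap L b i F s) (hg : g ≤ F.card) (hsb : s ≤ b) (hL : 2 * b ≤ (L i).card) :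
    ∃ F', FeasibleByOverlap L b (i + 1) F' (s + b - g) ∧ (L (i + 1)).card - g ≤ F'.card := by
  obtain ⟨G, hGF, rfl⟩ := exists_subset_card_eq hg
  exact ⟨_, h.succ hGF hsb hL, le_card_sdiff G _⟩

lemma exists_feasibleByOverlap_even {e : ℕ} (h0 : (L 0).card = b) (k : ℕ)
    (hmid : ∀ i, 1 ≤ i → i ≤ 2 * k + 2 → (L i).card = 2 * b + e) :
    ∃ F, FeasibleByOverlap L b (2 * k + 2) F (b - (k + 1) * e) ∧ b ≤ F.card := by
  induction k with
  | zero =>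
    have hL1 : (L 1).card = 2 * b + e := hmid 1 le_rfl (by omega)
    have hL2 : (L (1 + 1)).card = 2 * b + e := hmid 2 (by omega) le_rfl
    have hL1L0 := le_card_sdiff (L 0) (L 1)
    obtain ⟨F, hF, hFcard⟩ :=
      (feasibleByOverlap_one h0).exists_succ (g := b + e) (by omega) le_rfl (by omega)
    rw [show b + b - (b + e) = b - (0 + 1) * e by omega] at hF
    exact ⟨F, hF, by omega⟩
  | succ k ih =>
    have hL2 := hmid (2 * k + 2) (by omega) (by omega)
    have hL3 := hmid (2 * k + 2 + 1) (by omega) (by omega)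
    have hL4 := hmid (2 * k + 2 + 1 + 1) (by omega) (by omega)
    obtain ⟨F, hF, hFcard⟩ := ih fun j h1 h2 => hmid j h1 (by omega)
    obtain ⟨F', hF', hF'card⟩ := hF.exists_succ hFcard (by omega) (by omega)
    obtain ⟨F'', hF'', hF''card⟩ := hF'.exists_succ (g := b + e) (by omega) (by omega) (by omega)
    have hs : b - (k + 1) * e + b - b + b - (b + e) = b - (k + 1 + 1) * e := by
      rw [add_mul (k + 1) 1 e]
      omega
    rw [hs] at hF''
    exact ⟨F'', hF'', by omega⟩

lemma FeasibleByOverlap.pathChoosable_add_two {p s e : ℕ} {F : Finset ℕ}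
    (h : FeasibleByOverlap L b p F s) (hse : s ≤ e) (heb : e ≤ b) (hF : b ≤ F.card)
    (hp : 2 * b + e ≤ (L p).card) (h1 : (L (p + 1)).card = b + e)
    (h2 : (L (p + 2)).card = b + e) (hamp : 2 * b ≤ (L (p + 1) ∪ L (p + 2)).card) :
    PathChoosable (p + 2) L (fun _ => b) := by
  have hK : b - e ≤ (L (p + 1) \ L (p + 2)).card := by
    have := card_sdiff_add_card (L (p + 1)) (L (p + 2))
    omega
  obtain ⟨R, hR, hRcard⟩ := exists_subset_card_eq hK
  have hFR : s ≤ (F \ R).card := by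
    have := le_card_sdiff R F
    omega
  obtain ⟨X, hX, hXcard⟩ := exists_subset_card_eq hFR
  -- Colors of `L (p+1)` at `v_p` are confined to `X`, which keeps `R` free for `v_{p+1}`.
  set D := L (p + 1) \ X
  have hXD : X ⊆ F \ D := fun x hx =>
    mem_sdiff.2 ⟨(mem_sdiff.1 (hX hx)).1, fun hxD => (mem_sdiff.1 hxD).2 hx⟩
  have hLD : b ≤ (L p \ D).card := by
    have := le_card_sdiff D (L p)
    have : D.card ≤ b + e := h1 ▸ card_le_card sdiff_subset
    omega
  obtain ⟨C, hC, hCD⟩ :=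
    h.exists_feasible_disjoint (by omega) (hXcard ▸ card_le_card hXD) hLD
  have hRD : R ⊆ D := fun x hx => mem_sdiff.2
    ⟨(mem_sdiff.1 (hR hx)).1, fun hxX => (mem_sdiff.1 (hX hxX)).2 hx⟩
  have hCX : L (p + 1) ∩ C ⊆ X := fun x hx => by
    by_contra hxX
    exact disjoint_left.1 hCD (mem_inter.1 hx).2 (mem_sdiff.2 ⟨(mem_inter.1 hx).1, hxX⟩)
  refine hC.pathChoosable_add_two hR (disjoint_of_subset_right hRD hCD) (by omega) ?_ (by omega)
  have := card_sdiff_add_card_inter (L (p + 1)) C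
  have := card_le_card hCX
  omega

lemma pathChoosable_two {e : ℕ} (h0 : (L 0).card = b) (hbe : b ≤ e)
    (h1 : (L 1).card = b + e) (h2 : (L 2).card = b + e) :
    PathChoosable 2 L (fun _ => b) := by
  have hL1L0 := le_card_sdiff (L 0) (L 1)
  exact (feasible_zero h0).pathChoosable_add_two (R := ∅) (empty_subset _)
    (disjoint_empty_right _) (by simp) (show b ≤ (L 1 \ L 0).card by omega)
    (show 2 * b ≤ (L 2).card + (∅ : Finset ℕ).card by simp only [card_empty]; omega)

end

lemma evenCeil_spec {b e : ℕ} (he : 0 < e) :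
    ∃ q, evenCeil b e = 2 * q ∧ b ≤ q * e ∧ q * e < b + e := by
  refine ⟨(b + e - 1) / e, rfl, ?_, ?_⟩
  · have := Nat.lt_div_mul_add (a := b + e - 1) he
    omega
  · have := Nat.div_mul_le_self (b + e - 1) e
    omega

theorem path_choosable_of_oneReduced (n a b e : ℕ) (hb : 1 ≤ b) (he : 1 ≤ e)
    (ha : a = 2 * b + e) (L : ℕ → Finset ℕ)
    (h0 : (L 0).card = b)
    (hmid : ∀ i, 1 ≤ i → i ≤ n - 2 → (L i).card = a)
    (hn1 : (L (n - 1)).card = b + e) (hn : (L n).card = b + e)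
    (hamp : (L (n - 1) ∪ L n).card ≥ 2 * b)
    (hlen : n = evenCeil b e) :
    PathChoosable n L (fun _ => b) := by
  subst ha
  obtain ⟨q, hq, hbq, hqb⟩ := evenCeil_spec (b := b) he
  subst hlen
  rw [hq] at hmid hn1 hn hamp ⊢
  rcases Nat.lt_or_ge q 2 with hq2 | hq2
  · obtain rfl : q = 1 := by
      interval_cases q
      · omega
      · rfl
    exact pathChoosable_two h0 (by omega) hn1 hn
  · obtain ⟨k, rfl⟩ : ∃ k, q = k + 2 := ⟨q - 2, by omega⟩
    have hk : (k + 2) * e = k * e + 2 * e := by ring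
    have hk' : (k + 1) * e = k * e + e := by ring
    have hp : 2 * (k + 2) = 2 * k + 2 + 2 := by ring
    rw [hp] at hmid hn1 hn hamp ⊢
    rw [show 2 * k + 2 + 2 - 1 = 2 * k + 2 + 1 from rfl] at hn1 hamp
    obtain ⟨F, hF, hFcard⟩ := exists_feasibleByOverlap_even h0 k fun i h1 h2 => hmid i h1 (by omega)
    exact hF.pathChoosable_add_two (by omega) (by omega) hFcard
      (hmid _ (by omega) (by omega)).ge hn1 hn hamp
end

section
/- Every triangle-free induced subgraph of the triangular lattice is (5,2)-choosable. -/
/-- The triangular lattice: vertex set `ℤ × ℤ`, with `(x,y)` adjacent to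
`(x±1,y)`, `(x,y±1)`, `(x−1,y+1)` and `(x+1,y−1)`. -/
def triLattice : SimpleGraph (ℤ × ℤ) :=
  SimpleGraph.fromRel (fun p q =>
    q - p ∈ ({(1, 0), (-1, 0), (0, 1), (0, -1), (-1, 1), (1, -1)} : Set (ℤ × ℤ)))

def Choosable {V : Type*} (G : SimpleGraph V) (a b : ℕ) : Prop :=
  ∀ L : V → Finset ℕ, (∀ v, (L v).card = a) →
    ∃ c : V → Finset ℕ, (∀ v, c v ⊆ L v ∧ (c v).card = b) ∧
      ∀ u v, G.Adj u v → Disjoint (c u) (c v)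

namespace TriProof

def Dset : Finset (ℤ × ℤ) := {(1,0),(-1,0),(0,1),(0,-1),(-1,1),(1,-1)}

def adj (p q : ℤ × ℤ) : Prop := q - p ∈ Dset

lemma adj_iff {p q : ℤ × ℤ} : adj p q ↔
    ((q.1 = p.1 + 1 ∧ q.2 = p.2) ∨ (q.1 = p.1 - 1 ∧ q.2 = p.2) ∨
     (q.1 = p.1 ∧ q.2 = p.2 + 1) ∨ (q.1 = p.1 ∧ q.2 = p.2 - 1) ∨
     (q.1 = p.1 - 1 ∧ q.2 = p.2 + 1) ∨ (q.1 = p.1 + 1 ∧ q.2 = p.2 - 1)) := by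
  simp only [adj, Dset, Finset.mem_insert, Finset.mem_singleton, Prod.ext_iff,
    Prod.fst_sub, Prod.snd_sub]
  omega

lemma adj_symm {p q : ℤ × ℤ} (h : adj p q) : adj q p := by
  rw [adj_iff] at h ⊢; omega

lemma adj_same_y {p q : ℤ × ℤ} (h : adj p q) (hy : q.2 = p.2) :
    q.1 = p.1 + 1 ∨ q.1 = p.1 - 1 := by
  rw [adj_iff] at h; omega

lemma adj_below {p q : ℤ × ℤ} (h : adj p q) (hy : q.2 < p.2) :
    q.2 = p.2 - 1 ∧ (q.1 = p.1 ∨ q.1 = p.1 + 1) := by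
  rw [adj_iff] at h; omega

-- concrete adjacencies
lemma adjE {x y : ℤ} : adj (x, y) (x+1, y) := by rw [adj_iff]; simp
lemma adjSE {x y : ℤ} : adj (x, y) (x+1, y-1) := by rw [adj_iff]; simp
lemma adjS {x y : ℤ} : adj (x, y) (x, y-1) := by rw [adj_iff]; simp

section Geom
variable {S : Finset (ℤ × ℤ)}

/-- G1 : a vertex cannot have both lower neighbours -/
lemma geomG1 (htf : ∀ a ∈ S, ∀ b ∈ S, ∀ c ∈ S, adj a b → adj a c → adj b c → False) {x y : ℤ} (hu : (x, y) ∈ S) (h1 : (x, y-1) ∈ S) (h2 : (x+1, y-1) ∈ S) : False := by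
  refine htf (x,y) hu (x,y-1) h1 (x+1,y-1) h2 adjS adjSE ?_
  rw [adj_iff]; simp

/-- G2 : with a left neighbour, the lower-left neighbour is absent -/
lemma geomG2 (htf : ∀ a ∈ S, ∀ b ∈ S, ∀ c ∈ S, adj a b → adj a c → adj b c → False) {x y : ℤ} (hu : (x, y) ∈ S) (hl : (x-1, y) ∈ S) (h1 : (x, y-1) ∈ S) : False := by
  refine htf (x-1,y) hl (x,y) hu (x,y-1) h1 ?_ ?_ adjS
  · rw [adj_iff]; simp
  · rw [adj_iff]; simp

/-- G3 : with a right neighbour, the lower-right neighbour is absent -/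
lemma geomG3 (htf : ∀ a ∈ S, ∀ b ∈ S, ∀ c ∈ S, adj a b → adj a c → adj b c → False) {x y : ℤ} (hu : (x, y) ∈ S) (hr : (x+1, y) ∈ S) (h1 : (x+1, y-1) ∈ S) : False := by
  exact htf (x,y) hu (x+1,y) hr (x+1,y-1) h1 adjE adjSE adjS

end Geom


lemma disj_of_sdiff {a b M : Finset ℕ} (h : b ⊆ M \ a) : Disjoint a b :=
  Finset.disjoint_right.mpr (fun {x} hx => (Finset.mem_sdiff.mp (h hx)).2)


lemma pick2 {A : Finset ℕ} (h : 2 ≤ A.card) : ∃ c ⊆ A, c.card = 2 :=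
  Finset.exists_subset_card_eq h

lemma E1 {A : Finset ℕ} (h : 3 ≤ A.card) (P : Finset ℕ) :
    ∃ c, c ⊆ A ∧ c.card = 2 ∧ c ≠ P := by
  obtain ⟨t, htA, ht2⟩ := pick2 (A := A) (by omega)
  by_cases hP : t = P
  · subst hP
    have hsd : (A \ t).card = A.card - t.card := Finset.card_sdiff_of_subset htA
    obtain ⟨a, ha⟩ := Finset.card_pos.mp (show 0 < (A \ t).card by omega)
    have haA : a ∈ A := (Finset.mem_sdiff.mp ha).1
    have hat : a ∉ t := (Finset.mem_sdiff.mp ha).2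
    obtain ⟨p, hp⟩ := Finset.card_pos.mp (show 0 < t.card by omega)
    refine ⟨{a, p}, ?_, ?_, ?_⟩
    · intro x hx; rcases Finset.mem_insert.mp hx with rfl | hx
      · exact haA
      · exact htA (Finset.mem_singleton.mp hx ▸ hp)
    · rw [Finset.card_insert_of_notMem (by simp; rintro rfl; exact hat hp)]; simp
    · intro hcon; exact hat (hcon ▸ (by simp : a ∈ ({a, p} : Finset ℕ)))
  · exact ⟨t, htA, ht2, hP⟩

lemma H2pick {A : Finset ℕ} {a0 : ℕ} (h : 3 ≤ A.card) (ha0 : a0 ∈ A) (P : Finset ℕ) :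
    ∃ c, c ⊆ A ∧ c.card = 2 ∧ a0 ∈ c ∧ c ≠ P := by
  have hsd : (A \ {a0}).card = A.card - 1 := by
    rw [Finset.card_sdiff_of_subset (Finset.singleton_subset_iff.mpr ha0)]; simp
  obtain ⟨t, htA, ht2⟩ := pick2 (A := A \ {a0}) (by omega)
  obtain ⟨x1, hx1, x2, hx2, hne⟩ := Finset.one_lt_card.mp (show 1 < t.card by omega)
  have hx1A : x1 ∈ A := (Finset.mem_sdiff.mp (htA hx1)).1
  have hx2A : x2 ∈ A := (Finset.mem_sdiff.mp (htA hx2)).1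
  have hx1n : x1 ≠ a0 := by have := (Finset.mem_sdiff.mp (htA hx1)).2; simpa using this
  have hx2n : x2 ≠ a0 := by have := (Finset.mem_sdiff.mp (htA hx2)).2; simpa using this
  by_cases hP : ({a0, x1} : Finset ℕ) = P
  · refine ⟨{a0, x2}, ?_, ?_, Finset.mem_insert_self _ _, ?_⟩
    · intro x hx; rcases Finset.mem_insert.mp hx with rfl | hx
      · exact ha0
      · exact Finset.mem_singleton.mp hx ▸ hx2A
    · rw [Finset.card_insert_of_notMem (by simp [Ne.symm hx2n]), Finset.card_singleton]
    · intro hcon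
      rw [← hP] at hcon
      have : x2 ∈ ({a0, x1} : Finset ℕ) := hcon ▸ (by simp : x2 ∈ ({a0, x2} : Finset ℕ))
      rcases Finset.mem_insert.mp this with h' | h'
      · exact hx2n h'
      · exact hne (Finset.mem_singleton.mp h').symm
  · refine ⟨{a0, x1}, ?_, ?_, Finset.mem_insert_self _ _, hP⟩
    · intro x hx; rcases Finset.mem_insert.mp hx with rfl | hx
      · exact ha0
      · exact Finset.mem_singleton.mp hx ▸ hx1A
    · rw [Finset.card_insert_of_notMem (by simp [Ne.symm hx1n]), Finset.card_singleton]

lemma sdiff_card_ge (M s : Finset ℕ) : M.card - (s ∩ M).card ≤ (M \ s).card := by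
  have h1 : M \ s = M \ (s ∩ M) := by ext x; simp
  rw [h1, Finset.card_sdiff_of_subset Finset.inter_subset_right]


lemma E2 {A B : Finset ℕ} (hA : 3 ≤ A.card) (hB : 3 ≤ B.card)
    (hne : ¬(A = B ∧ A.card = 3)) (P : Finset ℕ) :
    ∃ a b, a ⊆ A ∧ b ⊆ B ∧ a.card = 2 ∧ b.card = 2 ∧ Disjoint a b ∧ a ≠ P := by
  by_cases h4 : 4 ≤ B.card
  · obtain ⟨a, haA, ha2, haP⟩ := E1 hA P
    have hcap : (a ∩ B).card ≤ 2 := le_trans (Finset.card_le_card Finset.inter_subset_left) (le_of_eq ha2)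
    have h2 : 2 ≤ (B \ a).card := le_trans (by omega) (sdiff_card_ge B a)
    obtain ⟨b, hb, hb2⟩ := pick2 h2
    exact ⟨a, b, haA, hb.trans (Finset.sdiff_subset), ha2, hb2, disj_of_sdiff hb, haP⟩
  · have hB3 : B.card = 3 := by omega
    have hns : ¬ A ⊆ B := by
      intro hsub
      have hle : A.card ≤ B.card := Finset.card_le_card hsub
      exact hne ⟨Finset.eq_of_subset_of_card_le hsub (by omega), by omega⟩
    obtain ⟨a0, ha0A, ha0B⟩ := Finset.not_subset.mp hns
    obtain ⟨a, haA, ha2, ha0a, haP⟩ := H2pick hA ha0A P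
    have hsub2 : a ∩ B ⊆ a \ {a0} := by
      intro x hx
      simp only [Finset.mem_inter] at hx
      simp only [Finset.mem_sdiff, Finset.mem_singleton]
      exact ⟨hx.1, fun h => ha0B (h ▸ hx.2)⟩
    have hc1 : (a \ {a0}).card ≤ 1 := by
      have := Finset.card_sdiff_of_subset (Finset.singleton_subset_iff.mpr ha0a); simp only [Finset.card_singleton] at this; omega
    have hcap : (a ∩ B).card ≤ 1 := le_trans (Finset.card_le_card hsub2) hc1
    have h2 : 2 ≤ (B \ a).card := le_trans (by omega) (sdiff_card_ge B a)
    obtain ⟨b, hb, hb2⟩ := pick2 h2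
    exact ⟨a, b, haA, hb.trans (Finset.sdiff_subset), ha2, hb2, disj_of_sdiff hb, haP⟩

lemma E3 {A M B : Finset ℕ} (hA : 3 ≤ A.card) (hM : 5 ≤ M.card) (hB : 3 ≤ B.card) (P : Finset ℕ) :
    ∃ a m b, a ⊆ A ∧ m ⊆ M ∧ b ⊆ B ∧ a.card = 2 ∧ m.card = 2 ∧ b.card = 2 ∧
      Disjoint a m ∧ Disjoint m b ∧ a ≠ P := by
  -- produce a,b with ((a ∪ b) ∩ M).card small, then pick m in M \ (a ∪ b)
  have main : ∀ (a b : Finset ℕ), a ⊆ A → b ⊆ B → a.card = 2 → b.card = 2 → a ≠ P →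
      ((a ∪ b) ∩ M).card + 2 ≤ M.card →
      ∃ a' m b', a' ⊆ A ∧ m ⊆ M ∧ b' ⊆ B ∧ a'.card = 2 ∧ m.card = 2 ∧ b'.card = 2 ∧
      Disjoint a' m ∧ Disjoint m b' ∧ a' ≠ P := by
    intro a b haA hbB ha2 hb2 haP hcard
    have h2 : 2 ≤ (M \ (a ∪ b)).card := le_trans (by omega) (sdiff_card_ge M (a ∪ b))
    obtain ⟨m, hm, hm2⟩ := pick2 h2
    have hdm : Disjoint (a ∪ b) m := disj_of_sdiff hm
    exact ⟨a, m, b, haA, hm.trans Finset.sdiff_subset, hbB, ha2, hm2, hb2,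
      Finset.disjoint_union_left.mp hdm |>.1, (Finset.disjoint_union_left.mp hdm |>.2).symm, haP⟩
  by_cases hAB : (A ∩ B).Nonempty
  · obtain ⟨t, ht⟩ := hAB
    obtain ⟨htA, htB⟩ := Finset.mem_inter.mp ht
    obtain ⟨a, haA, ha2, hta, haP⟩ := H2pick hA htA P
    obtain ⟨b, hbB, hb2, htb, _⟩ := H2pick hB htB ∅
    refine main a b haA hbB ha2 hb2 haP ?_
    have hint : 1 ≤ (a ∩ b).card := Finset.card_pos.mpr ⟨t, Finset.mem_inter.mpr ⟨hta, htb⟩⟩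
    have huni := Finset.card_union_add_card_inter a b
    have hle : ((a ∪ b) ∩ M).card ≤ (a ∪ b).card := Finset.card_le_card Finset.inter_subset_left
    omega
  · by_cases h1 : A ⊆ M
    · by_cases h2 : B ⊆ M
      · -- A, B ⊆ M disjoint, so M.card ≥ 6
        have hd : Disjoint A B := Finset.disjoint_iff_inter_eq_empty.mpr
          (Finset.not_nonempty_iff_eq_empty.mp hAB)
        have h6 : 6 ≤ M.card := by
          have := Finset.card_le_card (Finset.union_subset h1 h2)
          rw [Finset.card_union_of_disjoint hd] at this; omega
        obtain ⟨a, haA, ha2, haP⟩ := E1 hA P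
        obtain ⟨b, hbB, hb2⟩ := pick2 (show 2 ≤ B.card by omega)
        refine main a b haA hbB ha2 hb2 haP ?_
        have hle : ((a ∪ b) ∩ M).card ≤ (a ∪ b).card := Finset.card_le_card Finset.inter_subset_left
        have := Finset.card_union_le a b
        omega
      · obtain ⟨b0, hb0B, hb0M⟩ := Finset.not_subset.mp h2
        obtain ⟨a, haA, ha2, haP⟩ := E1 hA P
        obtain ⟨b, hbB, hb2, hb0b, _⟩ := H2pick hB hb0B ∅
        refine main a b haA hbB ha2 hb2 haP ?_
        have hsub : (a ∪ b) ∩ M ⊆ a ∪ (b \ {b0}) := by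
          intro x hx
          simp only [Finset.mem_inter, Finset.mem_union] at hx
          simp only [Finset.mem_union, Finset.mem_sdiff, Finset.mem_singleton]
          rcases hx.1 with h | h
          · exact Or.inl h
          · exact Or.inr ⟨h, fun he => hb0M (he ▸ hx.2)⟩
        have hc : (b \ {b0}).card ≤ 1 := by
          have := Finset.card_sdiff_of_subset (Finset.singleton_subset_iff.mpr hb0b); simp only [Finset.card_singleton] at this; omega
        have := Finset.card_le_card hsub
        have := Finset.card_union_le a (b \ {b0})
        omega
    · obtain ⟨a0, ha0A, ha0M⟩ := Finset.not_subset.mp h1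
      obtain ⟨a, haA, ha2, ha0a, haP⟩ := H2pick hA ha0A P
      obtain ⟨b, hbB, hb2⟩ := pick2 (show 2 ≤ B.card by omega)
      refine main a b haA hbB ha2 hb2 haP ?_
      have hsub : (a ∪ b) ∩ M ⊆ (a \ {a0}) ∪ b := by
        intro x hx
        simp only [Finset.mem_inter, Finset.mem_union] at hx
        simp only [Finset.mem_union, Finset.mem_sdiff, Finset.mem_singleton]
        rcases hx.1 with h | h
        · exact Or.inl ⟨h, fun he => ha0M (he ▸ hx.2)⟩
        · exact Or.inr h
      have hc : (a \ {a0}).card ≤ 1 := by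
        have := Finset.card_sdiff_of_subset (Finset.singleton_subset_iff.mpr ha0a); simp only [Finset.card_singleton] at this; omega
      have := Finset.card_le_card hsub
      have := Finset.card_union_le (a \ {a0}) b
      omega


theorem path (n : ℕ) : ∀ (A : ℕ → Finset ℕ) (bo : Option (Finset ℕ)),
    3 ≤ (A 0).card → 3 ≤ (A n).card → (∀ i, 0 < i → i < n → 5 ≤ (A i).card) →
    (n = 1 → ¬(A 0 = A 1 ∧ (A 0).card = 3)) →
    ∃ c : ℕ → Finset ℕ,
      (∀ i, i ≤ n → c i ⊆ A i ∧ (c i).card = 2) ∧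
      (∀ i, i < n → Disjoint (c i) (c (i+1))) ∧
      (∀ P, bo = some P → c 0 ≠ P) := by
  induction n using Nat.strong_induction_on with
  | _ n ih =>
  intro A bo h0 hn hint hprot
  by_cases hn0 : n = 0
  · subst hn0
    obtain ⟨c0, hc0A, hc02, hc0P⟩ := E1 h0 (bo.getD ∅)
    refine ⟨fun _ => c0, ?_, ?_, ?_⟩
    · intro i hi; interval_cases i; exact ⟨hc0A, hc02⟩
    · intro i hi; omega
    · intro P hP; rw [hP] at hc0P; simpa using hc0P
  by_cases hn1 : n = 1
  · subst hn1
    obtain ⟨a, b, haA, hbB, ha2, hb2, hd, haP⟩ := E2 h0 hn (hprot rfl) (bo.getD ∅)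
    refine ⟨fun i => if i = 0 then a else b, ?_, ?_, ?_⟩
    · intro i hi; interval_cases i
      · simpa using ⟨haA, ha2⟩
      · simpa using ⟨hbB, hb2⟩
    · intro i hi; interval_cases i; simpa using hd
    · intro P hP; rw [hP] at haP; simpa using haP
  by_cases hn2 : n = 2
  · subst hn2
    obtain ⟨a, m, b, haA, hmM, hbB, ha2, hm2, hb2, ham, hmb, haP⟩ :=
      E3 h0 (hint 1 (by omega) (by omega)) hn (bo.getD ∅)
    refine ⟨fun i => if i = 0 then a else if i = 1 then m else b, ?_, ?_, ?_⟩
    · intro i hi; interval_cases i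
      · simpa using ⟨haA, ha2⟩
      · simpa using ⟨hmM, hm2⟩
      · simpa using ⟨hbB, hb2⟩
    · intro i hi; interval_cases i
      · simpa using ham
      · simpa using hmb
    · intro P hP; rw [hP] at haP; simpa using haP
  · -- n ≥ 3
    have hn3 : 3 ≤ n := by omega
    obtain ⟨c0, hc0A, hc02, hc0P⟩ := E1 h0 (bo.getD ∅)
    set A' : ℕ → Finset ℕ := fun i => if i = 0 then A 1 \ c0 else A (i+1) with hA'
    have hA'0 : 3 ≤ (A' 0).card := by
      have h5 : 5 ≤ (A 1).card := hint 1 (by omega) (by omega)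
      have hcap : (c0 ∩ A 1).card ≤ 2 :=
        le_trans (Finset.card_le_card Finset.inter_subset_left) (le_of_eq hc02)
      have := sdiff_card_ge (A 1) c0
      simp only [hA', if_pos rfl]
      omega
    have hA'n : 3 ≤ (A' (n-1)).card := by
      simp only [hA', if_neg (by omega : ¬ n - 1 = 0)]
      have : n - 1 + 1 = n := by omega
      rw [this]; exact hn
    have hA'int : ∀ i, 0 < i → i < n - 1 → 5 ≤ (A' i).card := by
      intro i hi1 hi2
      simp only [hA', if_neg (by omega : ¬ i = 0)]
      exact hint (i+1) (by omega) (by omega)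
    obtain ⟨c', hc'1, hc'2, _⟩ := ih (n-1) (by omega) A' none hA'0 hA'n hA'int (by omega)
    refine ⟨fun i => if i = 0 then c0 else c' (i-1), ?_, ?_, ?_⟩
    · intro i hi
      by_cases hi0 : i = 0
      · subst hi0; simpa using ⟨hc0A, hc02⟩
      · simp only [if_neg hi0]
        have h1 : i - 1 ≤ n - 1 := by omega
        obtain ⟨hs, hc⟩ := hc'1 (i-1) h1
        refine ⟨?_, hc⟩
        by_cases hi1 : i = 1
        · subst hi1
          simp only [hA', if_pos rfl] at hs
          exact hs.trans ((Finset.sdiff_subset).trans (by simp))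
        · rw [hA'] at hs
          simp only [if_neg (by omega : ¬ i - 1 = 0)] at hs
          have : i - 1 + 1 = i := by omega
          rwa [this] at hs
    · intro i hi
      by_cases hi0 : i = 0
      · subst hi0
        simp only [if_pos rfl, if_neg (by omega : ¬ (0+1) = 0)]
        have hs := (hc'1 0 (by omega)).1
        simp only [hA', if_pos rfl] at hs
        exact disj_of_sdiff hs
      · simp only [if_neg hi0, if_neg (by omega : ¬ i + 1 = 0)]
        have hd := hc'2 (i-1) (by omega)
        have e1 : i - 1 + 1 = i := by omega
        have e2 : i + 1 - 1 = i := by omega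
        rw [e1] at hd; rw [e2]; exact hd
    · intro P hP
      simp only [if_pos rfl]
      rw [hP] at hc0P; exact hc0P


theorem line (N : ℕ) : ∀ (X : Finset ℤ), X.card ≤ N →
    ∀ (A : ℤ → Finset ℕ) (mc : ℤ → Finset ℕ → Finset ℕ → Prop) (b : ℤ → Option (Finset ℕ)),
    (∀ x ∈ X, ((x-1) ∉ X ∨ (x+1) ∉ X) → 3 ≤ (A x).card) →
    (∀ x ∈ X, (x-1) ∈ X → (x+1) ∈ X → 5 ≤ (A x).card) →
    (∀ x, x ∈ X → (x+1) ∈ X → (x-1) ∉ X → (x+2) ∉ X → ¬(A x = A (x+1) ∧ (A x).card = 3)) →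
    (∀ x P Q, P.card = 2 → Q.card = 2 → ¬ mc x P Q → x ∈ X ∧ (x+2) ∈ X ∧ (x+1) ∉ X) →
    (∀ x P Q Q', Q.card = 2 → Q'.card = 2 → ¬ mc x P Q → ¬ mc x P Q' → Q = Q') →
    (∀ x P, b x = some P → ∀ y ∈ X, x ≤ y) →
    ∃ c : ℤ → Finset ℕ,
      (∀ x ∈ X, c x ⊆ A x ∧ (c x).card = 2) ∧
      (∀ x, x ∈ X → (x+1) ∈ X → Disjoint (c x) (c (x+1))) ∧
      (∀ x, x ∈ X → (x+2) ∈ X → (x+1) ∉ X → mc x (c x) (c (x+2))) ∧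
      (∀ x ∈ X, ∀ P, b x = some P → c x ≠ P) := by
  induction N with
  | zero =>
    intro X hX A mc b _ _ _ H4 _ _
    have hXe : X = ∅ := Finset.card_eq_zero.mp (by omega)
    subst hXe
    refine ⟨fun _ => ∅, by simp, by simp, ?_, by simp⟩
    intro x hx; simp at hx
  | succ N ih =>
    intro X hX A mc b H1 H2 H3 H4 H5 H6
    classical
    rcases X.eq_empty_or_nonempty with rfl | hne
    · refine ⟨fun _ => ∅, by simp, by simp, ?_, by simp⟩
      intro x hx; simp at hx
    set x0 := X.min' hne with hx0
    have hx0X : x0 ∈ X := X.min'_mem hne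
    have hx0min : ∀ y ∈ X, x0 ≤ y := fun y hy => X.min'_le y hy
    -- find run length
    have hex : ∃ m : ℕ, x0 + (m : ℤ) + 1 ∉ X := by
      refine ⟨(X.max' hne - x0).toNat, ?_⟩
      intro hcon
      have hle := X.le_max' _ hcon
      have := X.le_max' x0 hx0X
      omega
    set n := Nat.find hex with hn
    have hend : x0 + (n : ℤ) + 1 ∉ X := Nat.find_spec hex
    have hrun : ∀ m : ℕ, m ≤ n → x0 + (m : ℤ) ∈ X := by
      intro m hm
      induction m with
      | zero => simpa using hx0X
      | succ k ihk =>
        have hk : ¬ (x0 + (k : ℤ) + 1 ∉ X) := Nat.find_min hex (by omega)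
        push_neg at hk
        have : ((k+1 : ℕ) : ℤ) = (k : ℤ) + 1 := by push_cast; ring
        rw [this, ← add_assoc]; exact hk
    have hrunZ : ∀ x : ℤ, x0 ≤ x → x ≤ x0 + n → x ∈ X := by
      intro x h1 h2
      have : x = x0 + ((x - x0).toNat : ℤ) := by omega
      rw [this]; exact hrun _ (by omega)
    -- bound for members of X beyond the run
    have hbeyond : ∀ x ∈ X, ¬ (x0 ≤ x ∧ x ≤ x0 + n) → x0 + n + 2 ≤ x := by
      intro x hx hcon
      have := hx0min x hx
      have : ¬ x = x0 + n + 1 := fun h => hend (h ▸ hx)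
      omega
    -- PATH on the run
    have hA0 : 3 ≤ (A (x0 + ((0:ℕ):ℤ))).card := by
      refine H1 _ (by simpa using hx0X) (Or.inl ?_)
      intro hcon; have := hx0min _ hcon; omega
    have hAn : 3 ≤ (A (x0 + (n:ℤ))).card := by
      refine H1 _ (hrun n le_rfl) (Or.inr ?_)
      exact hend
    have hAint : ∀ i : ℕ, 0 < i → i < n → 5 ≤ (A (x0 + (i:ℤ))).card := by
      intro i h1 h2
      exact H2 _ (hrun i (by omega)) (hrunZ _ (by omega) (by omega)) (hrunZ _ (by omega) (by omega))
    have hprot : n = 1 → ¬((fun i : ℕ => A (x0 + (i:ℤ))) 0 = (fun i : ℕ => A (x0 + (i:ℤ))) 1 ∧ ((fun i : ℕ => A (x0 + (i:ℤ))) 0).card = 3) := by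
      intro hn1
      simp only [Nat.cast_zero, Nat.cast_one, add_zero]
      refine H3 x0 hx0X ?_ ?_ ?_
      · simpa using hrun 1 (by omega)
      · intro hcon; have := hx0min _ hcon; omega
      · rw [hn1] at hend
        have he : x0 + ((1:ℕ):ℤ) + 1 = x0 + 2 := by push_cast; ring
        rwa [he] at hend
    obtain ⟨cR, hcR1, hcR2, hcR3⟩ := path n (fun i : ℕ => A (x0 + (i:ℤ))) (b x0) hA0 hAn hAint hprot
    -- the banned pair passed to the next run
    set PR := cR n with hPR
    set bnext : Option (Finset ℕ) :=
      (if h : ∃ Q : Finset ℕ, Q.card = 2 ∧ ¬ mc (x0 + n) PR Q then some h.choose else none) with hbnext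
    set X' := X.filter (fun y => x0 + n + 2 ≤ y) with hX'
    have hX'sub : X' ⊆ X := Finset.filter_subset _ _
    have hX'mem : ∀ y, y ∈ X' ↔ (y ∈ X ∧ x0 + n + 2 ≤ y) := by
      intro y; simp [hX']
    have hx0nX' : x0 ∉ X' := by
      intro hcon; have := (hX'mem x0).mp hcon; omega
    have hcard : X'.card ≤ N := by
      have hss : X' ⊂ X := Finset.ssubset_iff_of_subset hX'sub |>.mpr ⟨x0, hx0X, hx0nX'⟩
      have := Finset.card_lt_card hss
      omega
    -- membership transfers
    have hmemX'X : ∀ x, x ∈ X → x0 + n + 2 ≤ x → x ∈ X' := by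
      intro x h1 h2; exact (hX'mem x).mpr ⟨h1, h2⟩
    have hnotX : ∀ x, x0 + n + 2 ≤ x → x ∉ X' → x ∉ X := by
      intro x h1 h2 hcon; exact h2 (hmemX'X x hcon h1)
    have hnotXL : ∀ x, x0 + n + 1 ≤ x → x ∉ X' → x ∉ X := by
      intro x h1 h2 hcon
      by_cases he : x = x0 + n + 1
      · exact hend (he ▸ hcon)
      · exact h2 (hmemX'X x hcon (by omega))
    set mc' : ℤ → Finset ℕ → Finset ℕ → Prop := fun x P Q => (x0 + n < x → mc x P Q) with hmc'
    set b' : ℤ → Option (Finset ℕ) := fun x => if x = x0 + n + 2 then bnext else none with hb'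
    have G1 : ∀ x ∈ X', ((x-1) ∉ X' ∨ (x+1) ∉ X') → 3 ≤ (A x).card := by
      intro x hx hor
      have hgt := (hX'mem x).mp hx
      refine H1 x (hX'sub hx) ?_
      rcases hor with h | h
      · exact Or.inl (hnotXL _ (by omega) h)
      · exact Or.inr (hnotXL _ (by omega) h)
    have G2 : ∀ x ∈ X', (x-1) ∈ X' → (x+1) ∈ X' → 5 ≤ (A x).card := by
      intro x hx h1 h2
      exact H2 x (hX'sub hx) (hX'sub h1) (hX'sub h2)
    have G3 : ∀ x, x ∈ X' → (x+1) ∈ X' → (x-1) ∉ X' → (x+2) ∉ X' → ¬(A x = A (x+1) ∧ (A x).card = 3) := by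
      intro x hx h1 h2 h3
      have hgt := (hX'mem x).mp hx
      refine H3 x (hX'sub hx) (hX'sub h1) ?_ ?_
      · exact hnotXL _ (by omega) h2
      · exact hnotXL _ (by omega) h3
    have G4 : ∀ x P Q, P.card = 2 → Q.card = 2 → ¬ mc' x P Q → x ∈ X' ∧ (x+2) ∈ X' ∧ (x+1) ∉ X' := by
      intro x P Q hP hQ hnmc0
      have hnmc1 : ¬ (x0 + (n:ℤ) < x → mc x P Q) := hnmc0
      push_neg at hnmc1
      obtain ⟨hlt, hnmc⟩ := hnmc1
      obtain ⟨h1, h2, h3⟩ := H4 x P Q hP hQ hnmc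
      have hxge : x0 + n + 2 ≤ x := by
        have : ¬ x = x0 + n + 1 := fun h => hend (h ▸ h1)
        omega
      exact ⟨hmemX'X _ h1 hxge, hmemX'X _ h2 (by omega), fun hcon => h3 (hX'sub hcon)⟩
    have G5 : ∀ x P Q Q', Q.card = 2 → Q'.card = 2 → ¬ mc' x P Q → ¬ mc' x P Q' → Q = Q' := by
      intro x P Q Q' hQ hQ' hm1 hm2
      have hm1' : ¬ (x0 + (n:ℤ) < x → mc x P Q) := hm1
      have hm2' : ¬ (x0 + (n:ℤ) < x → mc x P Q') := hm2
      push_neg at hm1' hm2'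
      exact H5 x P Q Q' hQ hQ' hm1'.2 hm2'.2
    have G6 : ∀ x P, b' x = some P → ∀ y ∈ X', x ≤ y := by
      intro x P hbx y hy
      have hbx' : (if x = x0 + (n:ℤ) + 2 then bnext else none) = some P := hbx
      by_cases hxe : x = x0 + (n:ℤ) + 2
      · subst hxe
        have := (hX'mem y).mp hy
        omega
      · rw [if_neg hxe] at hbx'; exact absurd hbx' (by simp)
    obtain ⟨c', hc'1, hc'2, hc'3, hc'4⟩ := ih X' hcard A mc' b' G1 G2 G3 G4 G5 G6
    refine ⟨fun x => if x0 ≤ x ∧ x ≤ x0 + n then cR (x - x0).toNat else c' x, ?_, ?_, ?_, ?_⟩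
    · intro x hx
      by_cases hin : x0 ≤ x ∧ x ≤ x0 + n
      · simp only [if_pos hin]
        obtain ⟨hs, hc⟩ := hcR1 (x - x0).toNat (by omega)
        have he : x0 + (((x - x0).toNat : ℕ) : ℤ) = x := by omega
        rw [he] at hs
        exact ⟨hs, hc⟩
      · simp only [if_neg hin]
        exact hc'1 x (hmemX'X x hx (hbeyond x hx hin))
    · intro x hx hx1
      by_cases hin : x0 ≤ x ∧ x ≤ x0 + n
      · have hxn : x ≠ x0 + n := by
          rintro rfl; exact hend hx1
        have hin1 : x0 ≤ x + 1 ∧ x + 1 ≤ x0 + n := by omega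
        simp only [if_pos hin, if_pos hin1]
        have hd := hcR2 (x - x0).toNat (by omega)
        have he : (x - x0).toNat + 1 = (x + 1 - x0).toNat := by omega
        rwa [he] at hd
      · have hx'X : x ∈ X' := hmemX'X x hx (hbeyond x hx hin)
        have hin1 : ¬ (x0 ≤ x + 1 ∧ x + 1 ≤ x0 + n) := by
          have := (hX'mem x).mp hx'X; omega
        simp only [if_neg hin, if_neg hin1]
        refine hc'2 x hx'X (hmemX'X _ hx1 ?_)
        have := (hX'mem x).mp hx'X; omega
    · intro x hx hx2 hx1
      by_cases hin : x0 ≤ x ∧ x ≤ x0 + n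
      · -- x must be the right end x0 + n
        have hxeq : x = x0 + n := by
          by_contra hcon
          exact hx1 (hrunZ (x+1) (by omega) (by omega))
        subst hxeq
        have hq : x0 + n + 2 ∈ X' := hmemX'X _ hx2 (by omega)
        have hin2 : ¬ (x0 ≤ x0 + n + 2 ∧ x0 + n + 2 ≤ x0 + n) := by omega
        simp only [if_pos hin, if_neg hin2]
        have hcRn : cR ((x0 + n - x0).toNat) = PR := by
          rw [hPR]; congr 1; omega
        rw [hcRn]
        by_contra hcon
        have hQ2 : (c' (x0 + n + 2)).card = 2 := (hc'1 _ hq).2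
        have hexQ : ∃ Q : Finset ℕ, Q.card = 2 ∧ ¬ mc (x0 + n) PR Q := ⟨_, hQ2, hcon⟩
        have hbn : bnext = some hexQ.choose := by rw [hbnext]; exact dif_pos hexQ
        have hspec := hexQ.choose_spec
        have hne' : c' (x0 + (n:ℤ) + 2) ≠ hexQ.choose := by
          refine hc'4 _ hq hexQ.choose ?_
          show (if x0 + (n:ℤ) + 2 = x0 + (n:ℤ) + 2 then bnext else none) = some hexQ.choose
          rw [if_pos rfl, hbn]
        exact hne' (H5 (x0+n) PR _ _ hQ2 hspec.1 hcon hspec.2)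
      · have hx'X : x ∈ X' := hmemX'X x hx (hbeyond x hx hin)
        have hgt := (hX'mem x).mp hx'X
        have hin2 : ¬ (x0 ≤ x + 2 ∧ x + 2 ≤ x0 + n) := by omega
        simp only [if_neg hin, if_neg hin2]
        have hx2' : x + 2 ∈ X' := hmemX'X _ hx2 (by omega)
        have hx1' : x + 1 ∉ X' := fun hcon => hx1 (hX'sub hcon)
        have := hc'3 x hx'X hx2' hx1'
        exact this (by omega)
    · intro x hx P hbP
      have hxx0 : x = x0 := le_antisymm (H6 x P hbP x0 hx0X) (hx0min x hx)
      subst hxx0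
      have hin : x0 ≤ x0 ∧ x0 ≤ x0 + n := by omega
      simp only [if_pos hin]
      have : ((x0 - x0).toNat) = 0 := by omega
      rw [this]
      exact hcR3 P hbP


lemma compl_pair {M Q : Finset ℕ} (hM : M.card = 5) (h3 : (M \ Q).card = 3) (hQ : Q.card = 2) :
    Q = M \ (M \ Q) := by
  have h1 : M \ Q = M \ (Q ∩ M) := by ext x; simp
  have h2 : (M \ Q).card = M.card - (Q ∩ M).card := by
    rw [h1, Finset.card_sdiff_of_subset Finset.inter_subset_right]
  have h4 : (Q ∩ M).card = 2 := by
    have := Finset.card_le_card (Finset.inter_subset_left : Q ∩ M ⊆ Q); omega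
  have h5 : Q ∩ M = Q := Finset.eq_of_subset_of_card_le Finset.inter_subset_left (by omega)
  have hQM : Q ⊆ M := by rw [← h5]; exact Finset.inter_subset_right
  exact (Finset.sdiff_sdiff_eq_self hQM).symm

lemma pair_eta {v : ℤ×ℤ} {y : ℤ} (h : v.2 = y) : (v.1, y) = v := by
  rw [← h]

theorem global (N : ℕ) : ∀ (S : Finset (ℤ×ℤ)), S.card ≤ N →
    ∀ (L : ℤ×ℤ → Finset ℕ) (mc : ℤ×ℤ → Finset ℕ → Finset ℕ → Prop),
    (∀ a ∈ S, ∀ b ∈ S, ∀ c ∈ S, adj a b → adj a c → adj b c → False) →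
    (∀ v ∈ S, (L v).card = 5) →
    (∀ p P Q, P.card = 2 → Q.card = 2 → ¬ mc p P Q →
        p ∈ S ∧ (p.1+2, p.2) ∈ S ∧ (p.1+1, p.2) ∉ S ∧ (∀ v ∈ S, v.2 ≤ p.2)) →
    (∀ p P Q Q', Q.card = 2 → Q'.card = 2 → ¬ mc p P Q → ¬ mc p P Q' → Q = Q') →
    ∃ c : ℤ×ℤ → Finset ℕ,
      (∀ v ∈ S, c v ⊆ L v ∧ (c v).card = 2) ∧
      (∀ u ∈ S, ∀ v ∈ S, adj u v → Disjoint (c u) (c v)) ∧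
      (∀ p, p ∈ S → (p.1+2, p.2) ∈ S → (p.1+1, p.2) ∉ S → mc p (c p) (c (p.1+2, p.2))) := by
  induction N with
  | zero =>
    intro S hS L mc _ _ _ _
    have : S = ∅ := Finset.card_eq_zero.mp (by omega)
    subst this
    exact ⟨fun _ => ∅, by simp, by simp, by simp⟩
  | succ N ih =>
    intro S hS L mc htf hL H4g H5g
    classical
    rcases S.eq_empty_or_nonempty with rfl | hne
    · exact ⟨fun _ => ∅, by simp, by simp, by simp⟩
    have hne2 : (S.image Prod.snd).Nonempty := hne.image _
    set yM := (S.image Prod.snd).max' hne2 with hyMdef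
    have hyM : ∀ v ∈ S, v.2 ≤ yM := fun v hv =>
      Finset.le_max' _ _ (Finset.mem_image_of_mem _ hv)
    obtain ⟨vtop, hvtopS, hvtop2⟩ : ∃ v ∈ S, v.2 = yM := by
      have := (S.image Prod.snd).max'_mem hne2
      rw [← hyMdef] at this
      obtain ⟨v, hv, he⟩ := Finset.mem_image.mp this
      exact ⟨v, hv, he⟩
    set X := (S.filter (fun v => v.2 = yM)).image Prod.fst with hXdef
    have hXmem : ∀ x : ℤ, x ∈ X ↔ (x, yM) ∈ S := by
      intro x
      constructor
      · intro hx
        obtain ⟨v, hv, hvx⟩ := Finset.mem_image.mp hx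
        obtain ⟨hvS, hv2⟩ := Finset.mem_filter.mp hv
        have he : (x, yM) = v := by rw [← hvx]; exact pair_eta hv2
        rwa [he]
      · intro h
        exact Finset.mem_image.mpr ⟨(x,yM), Finset.mem_filter.mpr ⟨h, rfl⟩, rfl⟩
    set S' := S.filter (fun v => v.2 ≠ yM) with hS'def
    have hS'mem : ∀ v, v ∈ S' ↔ v ∈ S ∧ v.2 ≠ yM := by
      intro v; simp [hS'def]
    have hS'sub : S' ⊆ S := Finset.filter_subset _ _
    have hS'lt : ∀ v ∈ S', v.2 < yM := by
      intro v hv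
      obtain ⟨h1, h2⟩ := (hS'mem v).mp hv
      have := hyM v h1; omega
    have hS'card : S'.card ≤ N := by
      have hvnot : vtop ∉ S' := by
        intro hcon; exact ((hS'mem vtop).mp hcon).2 hvtop2
      have hss : S' ⊂ S := Finset.ssubset_iff_of_subset hS'sub |>.mpr ⟨vtop, hvtopS, hvnot⟩
      have := Finset.card_lt_card hss
      omega
    have htf' : ∀ a ∈ S', ∀ b ∈ S', ∀ c ∈ S', adj a b → adj a c → adj b c → False :=
      fun a ha b hb c hc => htf a (hS'sub ha) b (hS'sub hb) c (hS'sub hc)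
    -- the new constraints passed down
    set cond : ℤ×ℤ → Prop := fun p => p.2 = yM - 1 ∧ p ∈ S ∧ (p.1+2, p.2) ∈ S ∧
        (p.1, yM) ∈ S ∧ (p.1+1, yM) ∈ S ∧ (p.1-1, yM) ∉ S ∧ (p.1+2, yM) ∉ S with hconddef
    set mc' : ℤ×ℤ → Finset ℕ → Finset ℕ → Prop := fun p P Q =>
      cond p → ¬(L (p.1, yM) \ P = L (p.1+1, yM) \ Q ∧ (L (p.1, yM) \ P).card = 3 ∧
        (L (p.1+1, yM) \ Q).card = 3) with hmc'def
    have hmid : ∀ p : ℤ×ℤ, cond p → (p.1+1, yM-1) ∉ S := by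
      intro p hc hcon
      exact geomG3 htf hc.2.2.2.1 hc.2.2.2.2.1 hcon
    have G4 : ∀ p P Q, P.card = 2 → Q.card = 2 → ¬ mc' p P Q →
        p ∈ S' ∧ (p.1+2, p.2) ∈ S' ∧ (p.1+1, p.2) ∉ S' ∧ (∀ v ∈ S', v.2 ≤ p.2) := by
      intro p P Q hP hQ hnm
      have hnm' : ¬ (cond p → ¬ _) := hnm
      push_neg at hnm'
      obtain ⟨hc, _⟩ := hnm'
      have hcc := hc
      obtain ⟨he, hpS, hp2S, huS, hwS, _, _⟩ := hc
      refine ⟨(hS'mem p).mpr ⟨hpS, by omega⟩, (hS'mem _).mpr ⟨hp2S, by simp; omega⟩, ?_, ?_⟩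
      · intro hcon
        have : (p.1+1, p.2) ∈ S := hS'sub hcon
        rw [he] at this
        exact hmid p hcc this
      · intro v hv
        have := hS'lt v hv; omega
    have G5 : ∀ p P Q Q', Q.card = 2 → Q'.card = 2 → ¬ mc' p P Q → ¬ mc' p P Q' → Q = Q' := by
      intro p P Q Q' hQ hQ' h1 h2
      have h1' : ¬ (cond p → ¬ _) := h1
      have h2' : ¬ (cond p → ¬ _) := h2
      push_neg at h1' h2'
      obtain ⟨hc, heq1, _, hc31⟩ := h1'
      obtain ⟨_, heq2, _, hc32⟩ := h2'
      have hw5 : (L (p.1+1, yM)).card = 5 := hL _ hc.2.2.2.2.1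
      have e1 : Q = L (p.1+1, yM) \ (L (p.1+1, yM) \ Q) := compl_pair hw5 hc31 hQ
      have e2 : Q' = L (p.1+1, yM) \ (L (p.1+1, yM) \ Q') := compl_pair hw5 hc32 hQ'
      rw [e1, e2, ← heq1, ← heq2]
    obtain ⟨c', hc'1, hc'2, hc'3⟩ := ih S' hS'card L mc' htf' (fun v hv => hL v (hS'sub hv)) G4 G5
    -- available colours on the top line
    set B : ℤ → Finset ℕ := fun x =>
      (if (x, yM-1) ∈ S then c' (x, yM-1) else ∅) ∪
      (if (x+1, yM-1) ∈ S then c' (x+1, yM-1) else ∅) with hBdef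
    set A : ℤ → Finset ℕ := fun x => L (x, yM) \ B x with hAdef
    have hc'card : ∀ v, v ∈ S → v.2 = yM - 1 → (c' v).card = 2 := by
      intro v hv hv2
      exact (hc'1 v ((hS'mem v).mpr ⟨hv, by omega⟩)).2
    have hBcard : ∀ x, x ∈ X → (B x).card ≤ 2 := by
      intro x hx
      by_cases h1 : (x, yM-1) ∈ S
      · have h2 : (x+1, yM-1) ∉ S := by
          intro hcon
          exact geomG1 htf ((hXmem x).mp hx) h1 hcon
        have : B x = c' (x, yM-1) := by
          rw [hBdef]; simp [h1, h2]
        rw [this, hc'card _ h1 rfl]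
      · by_cases h2 : (x+1, yM-1) ∈ S
        · have : B x = c' (x+1, yM-1) := by
            rw [hBdef]; simp [h1, h2]
          rw [this, hc'card _ h2 rfl]
        · have : B x = ∅ := by rw [hBdef]; simp [h1, h2]
          rw [this]; simp
    have hA1 : ∀ x ∈ X, ((x-1) ∉ X ∨ (x+1) ∉ X) → 3 ≤ (A x).card := by
      intro x hx _
      have h5 : (L (x, yM)).card = 5 := hL _ ((hXmem x).mp hx)
      have hb := hBcard x hx
      have hbc : (B x ∩ L (x, yM)).card ≤ 2 :=
        le_trans (Finset.card_le_card Finset.inter_subset_left) hb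
      have := sdiff_card_ge (L (x, yM)) (B x)
      show 3 ≤ (L (x, yM) \ B x).card
      omega
    have hA2 : ∀ x ∈ X, (x-1) ∈ X → (x+1) ∈ X → 5 ≤ (A x).card := by
      intro x hx hxm hxp
      have h1 : (x, yM-1) ∉ S := by
        intro hcon
        have hl : (x-1, yM) ∈ S := (hXmem _).mp hxm
        exact geomG2 htf ((hXmem x).mp hx) hl hcon
      have h2 : (x+1, yM-1) ∉ S := by
        intro hcon
        exact geomG3 htf ((hXmem x).mp hx) ((hXmem _).mp hxp) hcon
      have hBe : B x = ∅ := by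
        show (if (x, yM-1) ∈ S then c' (x, yM-1) else ∅) ∪ (if (x+1, yM-1) ∈ S then c' (x+1, yM-1) else ∅) = ∅
        rw [if_neg h1, if_neg h2, Finset.union_empty]
      have h5 : (L (x, yM)).card = 5 := hL _ ((hXmem x).mp hx)
      show 5 ≤ (L (x, yM) \ B x).card
      rw [hBe, Finset.sdiff_empty]
      omega
    have hA3 : ∀ x, x ∈ X → (x+1) ∈ X → (x-1) ∉ X → (x+2) ∉ X →
        ¬(A x = A (x+1) ∧ (A x).card = 3) := by
      intro x hx hxp hxm hxpp
      have huS : (x, yM) ∈ S := (hXmem x).mp hx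
      have hwS : (x+1, yM) ∈ S := (hXmem _).mp hxp
      have hmidx : (x+1, yM-1) ∉ S := by
        intro hcon; exact geomG3 htf huS hwS hcon
      have hAx : A x = L (x, yM) \ (if (x, yM-1) ∈ S then c' (x, yM-1) else ∅) := by
        show L (x, yM) \ B x = _
        have hBx : B x = (if (x, yM-1) ∈ S then c' (x, yM-1) else ∅) := by
          show (if (x, yM-1) ∈ S then c' (x, yM-1) else ∅) ∪ (if (x+1, yM-1) ∈ S then c' (x+1, yM-1) else ∅) = _
          rw [if_neg hmidx, Finset.union_empty]
        rw [hBx]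
      have hAx1 : A (x+1) = L (x+1, yM) \ (if (x+2, yM-1) ∈ S then c' (x+2, yM-1) else ∅) := by
        show L (x+1, yM) \ B (x+1) = _
        have hBx : B (x+1) = (if (x+2, yM-1) ∈ S then c' (x+2, yM-1) else ∅) := by
          show (if (x+1, yM-1) ∈ S then c' (x+1, yM-1) else ∅) ∪ (if (x+1+1, yM-1) ∈ S then c' (x+1+1, yM-1) else ∅) = _
          rw [if_neg hmidx, Finset.empty_union]
          have e : ((x+1+1 : ℤ), yM-1) = ((x+2 : ℤ), yM-1) := by congr 1; ring
          rw [e]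
        rw [hBx]
      by_cases hp : (x, yM-1) ∈ S
      · by_cases hq : (x+2, yM-1) ∈ S
        · -- both lower supports present: use the constraint on c'
          have hpS' : ((x, yM-1) : ℤ×ℤ) ∈ S' := (hS'mem _).mpr ⟨hp, by show (yM-1 : ℤ) ≠ yM; omega⟩
          have hqS' : ((x+2, yM-1) : ℤ×ℤ) ∈ S' := (hS'mem _).mpr ⟨hq, by show (yM-1 : ℤ) ≠ yM; omega⟩
          have hcondp : cond (x, yM-1) := by
            refine ⟨rfl, hp, ?_, ?_, ?_, ?_, ?_⟩
            · simpa using hq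
            · simpa using huS
            · simpa using hwS
            · simpa using fun hcon => hxm ((hXmem _).mpr hcon)
            · simpa using fun hcon => hxpp ((hXmem _).mpr hcon)
          have hmc' := hc'3 (x, yM-1) hpS' (by simpa using hqS') (by
            simp only []
            intro hcon
            exact hmidx (hS'sub (by simpa using hcon)))
          have hbad := hmc' hcondp
          rintro ⟨heq, hcard⟩
          rw [hAx, if_pos hp] at heq hcard
          rw [hAx1, if_pos hq] at heq
          refine hbad ?_
          refine ⟨by simpa using heq, by simpa using hcard, ?_⟩
          have := heq ▸ hcard
          simpa using this
        · rintro ⟨heq, hcard⟩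
          have h5 : (L (x+1, yM)).card = 5 := hL _ hwS
          rw [heq, hAx1, if_neg hq] at hcard
          simp only [Finset.sdiff_empty] at hcard
          omega
      · rintro ⟨heq, hcard⟩
        have h5 : (L (x, yM)).card = 5 := hL _ huS
        rw [hAx, if_neg hp] at hcard
        simp only [Finset.sdiff_empty] at hcard
        omega
    -- the constraints for the top line
    set mcX : ℤ → Finset ℕ → Finset ℕ → Prop := fun x P Q => mc (x, yM) P Q with hmcXdef
    have X4 : ∀ x P Q, P.card = 2 → Q.card = 2 → ¬ mcX x P Q →
        x ∈ X ∧ (x+2) ∈ X ∧ (x+1) ∉ X := by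
      intro x P Q hP hQ hnm
      obtain ⟨h1, h2, h3, _⟩ := H4g (x, yM) P Q hP hQ hnm
      refine ⟨(hXmem x).mpr h1, (hXmem _).mpr (by simpa using h2), ?_⟩
      intro hcon
      exact h3 (by simpa using (hXmem _).mp hcon)
    have X5 : ∀ x P Q Q', Q.card = 2 → Q'.card = 2 → ¬ mcX x P Q → ¬ mcX x P Q' → Q = Q' := by
      intro x P Q Q' hQ hQ' h1 h2
      exact H5g (x, yM) P Q Q' hQ hQ' h1 h2
    obtain ⟨cL, hcL1, hcL2, hcL3, _⟩ :=
      line X.card X le_rfl A mcX (fun _ => none) hA1 hA2 hA3 X4 X5 (by simp)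
    -- assemble the colouring
    set c : ℤ×ℤ → Finset ℕ := fun v => if v.2 = yM then cL v.1 else c' v with hcdef
    have hctop : ∀ v : ℤ×ℤ, v.2 = yM → c v = cL v.1 := by
      intro v hv; simp [hcdef, hv]
    have hcbot : ∀ v : ℤ×ℤ, v.2 ≠ yM → c v = c' v := by
      intro v hv; simp [hcdef, hv]
    have hCsub : ∀ v ∈ S, c v ⊆ L v ∧ (c v).card = 2 := by
      intro v hv
      by_cases hv2 : v.2 = yM
      · rw [hctop v hv2]
        have hvX : v.1 ∈ X := (hXmem _).mpr (by rw [pair_eta hv2]; exact hv)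
        obtain ⟨hs, hc2⟩ := hcL1 v.1 hvX
        refine ⟨?_, hc2⟩
        have hsub : A v.1 ⊆ L (v.1, yM) := by rw [hAdef]; exact Finset.sdiff_subset
        rw [← pair_eta hv2]
        exact hs.trans hsub
      · rw [hcbot v hv2]
        exact hc'1 v ((hS'mem v).mpr ⟨hv, hv2⟩)
    -- key cross-line disjointness
    have hcross : ∀ u ∈ S, ∀ v ∈ S, u.2 = yM → v.2 ≠ yM → adj u v → Disjoint (c u) (c v) := by
      intro u hu v hv hu2 hv2 hadj
      have hvlt : v.2 < u.2 := by
        have := hyM v hv; omega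
      obtain ⟨hvy, hvx⟩ := adj_below hadj (by omega)
      rw [hctop u hu2, hcbot v hv2]
      have hsub : cL u.1 ⊆ A u.1 := (hcL1 u.1 ((hXmem _).mpr (by rw [pair_eta hu2]; exact hu))).1
      have hvform : v = (u.1, yM - 1) ∨ v = (u.1 + 1, yM - 1) := by
        rcases hvx with h | h
        · left; rw [← pair_eta (show v.2 = yM - 1 by omega), h]
        · right; rw [← pair_eta (show v.2 = yM - 1 by omega), h]
      have hcsub : c' v ⊆ B u.1 := by
        rw [hBdef]
        rcases hvform with rfl | rfl
        · simp only []
          rw [if_pos hv]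
          exact Finset.subset_union_left
        · simp only []
          rw [if_pos hv]
          exact Finset.subset_union_right
      rw [Finset.disjoint_left]
      intro t ht hct
      have htA : t ∈ A u.1 := hsub ht
      rw [hAdef] at htA
      exact (Finset.mem_sdiff.mp htA).2 (hcsub hct)
    refine ⟨c, hCsub, ?_, ?_⟩
    · -- properness
      intro u hu v hv hadj
      by_cases hu2 : u.2 = yM
      · by_cases hv2 : v.2 = yM
        · rcases adj_same_y hadj (hv2.trans hu2.symm) with h | h
          · have h1 : u.1 ∈ X := (hXmem _).mpr (by rw [pair_eta hu2]; exact hu)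
            have h2 : u.1 + 1 ∈ X := (hXmem _).mpr (by rw [← h, pair_eta hv2]; exact hv)
            have := hcL2 u.1 h1 h2
            rw [hctop u hu2, hctop v hv2, h]
            exact this
          · have h1 : v.1 ∈ X := (hXmem _).mpr (by rw [pair_eta hv2]; exact hv)
            have h2 : v.1 + 1 ∈ X := (hXmem _).mpr (by
              rw [show v.1 + 1 = u.1 by omega, pair_eta hu2]; exact hu)
            have := hcL2 v.1 h1 h2
            rw [hctop u hu2, hctop v hv2, show u.1 = v.1 + 1 by omega]
            exact this.symm
        · exact hcross u hu v hv hu2 hv2 hadj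
      · by_cases hv2 : v.2 = yM
        · exact (hcross v hv u hu hv2 hu2 (adj_symm hadj)).symm
        · rw [hcbot u hu2, hcbot v hv2]
          exact hc'2 u ((hS'mem u).mpr ⟨hu, hu2⟩) v ((hS'mem v).mpr ⟨hv, hv2⟩) hadj
    · -- constraints
      intro p hp h2 h1
      by_cases hmc : mc p (c p) (c (p.1+2, p.2))
      · exact hmc
      · exfalso
        have hc1 := (hCsub p hp).2
        have hc2 := (hCsub _ h2).2
        obtain ⟨_, _, _, htop⟩ := H4g p (c p) (c (p.1+2, p.2)) hc1 hc2 hmc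
        have hp2 : p.2 = yM := le_antisymm (hyM p hp) (by
          have := htop vtop hvtopS; omega)
        have hx1 : p.1 ∈ X := (hXmem _).mpr (by rw [pair_eta hp2]; exact hp)
        have hx2 : p.1 + 2 ∈ X := (hXmem _).mpr (by
          rw [show ((p.1+2, yM) : ℤ×ℤ) = (p.1+2, p.2) from by rw [hp2]]; exact h2)
        have hx3 : p.1 + 1 ∉ X := by
          intro hcon
          exact h1 (by rw [show ((p.1+1, p.2) : ℤ×ℤ) = (p.1+1, yM) from by rw [hp2]]
                       exact (hXmem _).mp hcon)
        have := hcL3 p.1 hx1 hx2 hx3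
        have hmcc : mc (p.1, yM) (cL p.1) (cL (p.1+2)) := this
        rw [pair_eta hp2] at hmcc
        rw [hctop p hp2] at hmc
        rw [hctop (p.1+2, p.2) (by simpa using hp2)] at hmc
        exact hmc hmcc


lemma finite_choosable {S : Finset (ℤ×ℤ)}
    (htf : ∀ a ∈ S, ∀ b ∈ S, ∀ c ∈ S, adj a b → adj a c → adj b c → False)
    (L : ℤ×ℤ → Finset ℕ) (hL : ∀ v ∈ S, (L v).card = 5) :
    ∃ c : ℤ×ℤ → Finset ℕ,
      (∀ v ∈ S, c v ⊆ L v ∧ (c v).card = 2) ∧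
      (∀ u ∈ S, ∀ v ∈ S, adj u v → Disjoint (c u) (c v)) := by
  obtain ⟨c, h1, h2, _⟩ := global S.card S le_rfl L (fun _ _ _ => True) htf hL
    (fun p P Q _ _ h => absurd trivial h) (fun p P Q Q' _ _ h _ => absurd trivial h)
  exact ⟨c, h1, h2⟩

set_option maxHeartbeats 1000000 in
lemma triAdj_iff' {p q : ℤ×ℤ} : triLattice.Adj p q ↔
    ((q.1 = p.1 + 1 ∧ q.2 = p.2) ∨ (q.1 = p.1 - 1 ∧ q.2 = p.2) ∨
     (q.1 = p.1 ∧ q.2 = p.2 + 1) ∨ (q.1 = p.1 ∧ q.2 = p.2 - 1) ∨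
     (q.1 = p.1 - 1 ∧ q.2 = p.2 + 1) ∨ (q.1 = p.1 + 1 ∧ q.2 = p.2 - 1)) := by
  rw [triLattice, SimpleGraph.fromRel_adj]
  have e : ∀ a b : ℤ×ℤ, a - b = (a.1-b.1, a.2-b.2) := fun _ _ => rfl
  simp only [Set.mem_insert_iff, Set.mem_singleton_iff, e, Prod.mk.injEq, ne_eq, Prod.ext_iff]
  omega

lemma triAdj_iff {p q : ℤ×ℤ} : triLattice.Adj p q ↔ adj p q :=
  triAdj_iff'.trans adj_iff.symm

lemma tf_of_cliqueFree {R : Set (ℤ×ℤ)} (htf : (triLattice.induce R).CliqueFree 3)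
    (S : Finset (ℤ×ℤ)) (hS : ∀ p ∈ S, p ∈ R) :
    ∀ a ∈ S, ∀ b ∈ S, ∀ c ∈ S, adj a b → adj a c → adj b c → False := by
  intro a ha b hb c hc hab hac hbc
  have hA1 : (triLattice.induce R).Adj ⟨a, hS a ha⟩ ⟨b, hS b hb⟩ := triAdj_iff.mpr hab
  have hA2 : (triLattice.induce R).Adj ⟨a, hS a ha⟩ ⟨c, hS c hc⟩ := triAdj_iff.mpr hac
  have hA3 : (triLattice.induce R).Adj ⟨b, hS b hb⟩ ⟨c, hS c hc⟩ := triAdj_iff.mpr hbc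
  exact htf _ (SimpleGraph.is3Clique_triple_iff.mpr ⟨hA1, hA2, hA3⟩)

theorem main (R : Set (ℤ × ℤ))
    (htf : (triLattice.induce R).CliqueFree 3) :
    Choosable (triLattice.induce R) 5 2 := by
  intro L hL
  classical
  have hfin : ∀ T : Finset R, ∃ c : R → Finset ℕ,
      (∀ v ∈ T, c v ⊆ L v ∧ (c v).card = 2) ∧
      (∀ u ∈ T, ∀ v ∈ T, (triLattice.induce R).Adj u v → Disjoint (c u) (c v)) := by
    intro T
    set S : Finset (ℤ×ℤ) := T.image Subtype.val with hSdef
    have hSR : ∀ p ∈ S, p ∈ R := by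
      intro p hp
      obtain ⟨v, _, rfl⟩ := Finset.mem_image.mp hp
      exact v.2
    set L' : ℤ×ℤ → Finset ℕ := fun p => if h : p ∈ R then L ⟨p, h⟩ else {0,1,2,3,4} with hL'def
    have hL5 : ∀ v ∈ S, (L' v).card = 5 := by
      intro v hv
      have : L' v = L ⟨v, hSR v hv⟩ := by rw [hL'def]; simp [dif_pos (hSR v hv)]
      rw [this]; exact hL _
    obtain ⟨cS, hc1, hc2⟩ := finite_choosable (tf_of_cliqueFree htf S hSR) L' hL5
    refine ⟨fun v => cS v.val, ?_, ?_⟩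
    · intro v hv
      have hvS : v.val ∈ S := Finset.mem_image_of_mem _ hv
      obtain ⟨h1, h2⟩ := hc1 _ hvS
      refine ⟨?_, h2⟩
      have he : L' v.val = L v := by
        rw [hL'def]; simp only [dif_pos v.2]
      rwa [he] at h1
    · intro u hu v hv hadj
      exact hc2 _ (Finset.mem_image_of_mem _ hu) _ (Finset.mem_image_of_mem _ hv)
        (triAdj_iff.mp hadj)
  choose F hF1 hF2 using hfin
  haveI : Nonempty (Finset R) := ⟨∅⟩
  haveI := (Filter.atTop_neBot (α := Finset R))
  set U : Ultrafilter (Finset R) := Ultrafilter.of Filter.atTop with hUdef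
  have hUat : ∀ T₀ : Finset R, {T | T₀ ⊆ T} ∈ U := by
    intro T₀
    exact Ultrafilter.of_le Filter.atTop (Filter.mem_atTop T₀)
  have hval : ∀ v : R, ∃ Q : Finset ℕ, Q ⊆ L v ∧ Q.card = 2 ∧ {T | F T v = Q} ∈ U := by
    intro v
    have h1 : {T : Finset R | {v} ⊆ T} ∈ U := hUat {v}
    have h2 : {T : Finset R | {v} ⊆ T} ⊆
        ⋃ Q ∈ (((L v).powersetCard 2 : Finset (Finset ℕ)) : Set (Finset ℕ)), {T | F T v = Q} := by
      intro T hT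
      have hvT : v ∈ T := hT (Finset.mem_singleton_self v)
      obtain ⟨hs, hc⟩ := hF1 T v hvT
      exact Set.mem_biUnion (Finset.mem_coe.mpr (Finset.mem_powersetCard.mpr ⟨hs, hc⟩)) rfl
    have h3 : (⋃ Q ∈ (((L v).powersetCard 2 : Finset (Finset ℕ)) : Set (Finset ℕ)),
        {T | F T v = Q}) ∈ U := Filter.mem_of_superset h1 h2
    obtain ⟨Q, hQmem, hQU⟩ := (Ultrafilter.finite_biUnion_mem_iff (Finset.finite_toSet _)).mp h3
    obtain ⟨hsub, hcard⟩ := Finset.mem_powersetCard.mp (Finset.mem_coe.mp hQmem)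
    exact ⟨Q, hsub, hcard, hQU⟩
  choose g hg1 hg2 hg3 using hval
  refine ⟨g, fun v => ⟨hg1 v, hg2 v⟩, ?_⟩
  intro u v hadj
  have hmem : ({T | F T u = g u} ∩ {T | F T v = g v} ∩ {T : Finset R | {u, v} ⊆ T}) ∈ U :=
    Filter.inter_mem (Filter.inter_mem (hg3 u) (hg3 v)) (hUat {u,v})
  obtain ⟨T, hT⟩ := Ultrafilter.nonempty_of_mem hmem
  obtain ⟨⟨h1, h2⟩, h3⟩ := hT
  have huT : u ∈ T := h3 (by simp)
  have hvT : v ∈ T := h3 (by simp)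
  have := hF2 T u huT v hvT hadj
  rwa [h1, h2] at this


end TriProof

theorem triangleFree_subgraph_of_triLattice_52_choosable (R : Set (ℤ × ℤ))
    (htf : (triLattice.induce R).CliqueFree 3) :
    Choosable (triLattice.induce R) 5 2 :=
  TriProof.main R htf
end

section
/- Let R be a finite triangle-free induced subgraph of the triangular lattice in which every vertex has degree 2 or 3, every maximal path of degree-2 vertices between two nodes has length at most 3, and R has at least one node. Let (x,y) be a cutting node and P = v_0,...,v_n the cutting handle at (x,y). Then n = 3 and v_3 has a neighbor v_4 ≠ v_2 of degree at most 2. -/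
/-- Degree of a vertex in the subgraph of the triangular lattice induced by `R`. -/
noncomputable def ideg (R : Set (ℤ × ℤ)) (v : R) : ℕ := ((triLattice.induce R).neighborSet v).ncard

/-- A node: vertex of degree `3`. -/
def IsNode (R : Set (ℤ × ℤ)) (v : R) : Prop := ideg R v = 3

/-- A left node: its neighbors are `(x−1,y)`, `(x,y+1)` and `(x+1,y−1)`. -/
def IsLeftNode (R : Set (ℤ × ℤ)) (v : R) : Prop :=
  Subtype.val '' (triLattice.induce R).neighborSet v =
    {((v : ℤ × ℤ).1 - 1, (v : ℤ × ℤ).2), ((v : ℤ × ℤ).1, (v : ℤ × ℤ).2 + 1),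
     ((v : ℤ × ℤ).1 + 1, (v : ℤ × ℤ).2 - 1)}

/-- A cutting node: a left node `(x,y)` with `y ≥ y'` for every node `(x',y')` and
`x' ≤ x` for every left node `(x',y)`. -/
def IsCuttingNode (R : Set (ℤ × ℤ)) (v : R) : Prop :=
  IsLeftNode R v ∧ (∀ w : R, IsNode R w → (w : ℤ × ℤ).2 ≤ (v : ℤ × ℤ).2) ∧
    (∀ w : R, IsLeftNode R w → (w : ℤ × ℤ).2 = (v : ℤ × ℤ).2 →
      (w : ℤ × ℤ).1 ≤ (v : ℤ × ℤ).1)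

/-- A handle of length `m`: a path `w 0, …, w m` whose endpoints are nodes and whose
internal vertices have degree `2`. -/
def IsHandle (R : Set (ℤ × ℤ)) (m : ℕ) (w : ℕ → R) : Prop :=
  (∀ i ≤ m, ∀ j ≤ m, w i = w j → i = j) ∧
  (∀ i, i < m → (triLattice.induce R).Adj (w i) (w (i + 1))) ∧
  IsNode R (w 0) ∧ IsNode R (w m) ∧
  ∀ i, 1 ≤ i → i ≤ m - 1 → ideg R (w i) = 2

/-- A cutting handle at the cutting node `v = (x,y)`: a handle with endpoint `v`
one of whose internal vertices is `(x,y+1)`. -/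
def IsCuttingHandle (R : Set (ℤ × ℤ)) (m : ℕ) (w : ℕ → R) (v : R) : Prop :=
  IsHandle R m w ∧ w 0 = v ∧
    ∃ i, 1 ≤ i ∧ i ≤ m - 1 ∧ (w i : ℤ × ℤ) = ((v : ℤ × ℤ).1, (v : ℤ × ℤ).2 + 1)


open SimpleGraph

lemma tri_adj_iff (p q : ℤ × ℤ) : triLattice.Adj p q ↔
    ((q.1 = p.1 + 1 ∧ q.2 = p.2) ∨ (q.1 = p.1 - 1 ∧ q.2 = p.2) ∨
     (q.1 = p.1 ∧ q.2 = p.2 + 1) ∨ (q.1 = p.1 ∧ q.2 = p.2 - 1) ∨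
     (q.1 = p.1 - 1 ∧ q.2 = p.2 + 1) ∨ (q.1 = p.1 + 1 ∧ q.2 = p.2 - 1)) := by
  simp only [triLattice, fromRel_adj, Set.mem_insert_iff, Set.mem_singleton_iff,
    Prod.ext_iff, Prod.fst_sub, Prod.snd_sub, ne_eq]
  omega

lemma ind_tri {R : Set (ℤ × ℤ)} {a b : R} :
    (triLattice.induce R).Adj a b ↔ triLattice.Adj a.val b.val := Iff.rfl

lemma adj_coords {R : Set (ℤ × ℤ)} {a b : R} (h : (triLattice.induce R).Adj a b) :
    (((b:ℤ×ℤ)).1 = ((a:ℤ×ℤ)).1 + 1 ∧ ((b:ℤ×ℤ)).2 = ((a:ℤ×ℤ)).2) ∨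
    (((b:ℤ×ℤ)).1 = ((a:ℤ×ℤ)).1 - 1 ∧ ((b:ℤ×ℤ)).2 = ((a:ℤ×ℤ)).2) ∨
    (((b:ℤ×ℤ)).1 = ((a:ℤ×ℤ)).1 ∧ ((b:ℤ×ℤ)).2 = ((a:ℤ×ℤ)).2 + 1) ∨
    (((b:ℤ×ℤ)).1 = ((a:ℤ×ℤ)).1 ∧ ((b:ℤ×ℤ)).2 = ((a:ℤ×ℤ)).2 - 1) ∨
    (((b:ℤ×ℤ)).1 = ((a:ℤ×ℤ)).1 - 1 ∧ ((b:ℤ×ℤ)).2 = ((a:ℤ×ℤ)).2 + 1) ∨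
    (((b:ℤ×ℤ)).1 = ((a:ℤ×ℤ)).1 + 1 ∧ ((b:ℤ×ℤ)).2 = ((a:ℤ×ℤ)).2 - 1) :=
  (tri_adj_iff _ _).mp (ind_tri.mp h)

lemma mk_adj {R : Set (ℤ × ℤ)} {a b : R}
    (h : (((b:ℤ×ℤ)).1 = ((a:ℤ×ℤ)).1 + 1 ∧ ((b:ℤ×ℤ)).2 = ((a:ℤ×ℤ)).2) ∨
    (((b:ℤ×ℤ)).1 = ((a:ℤ×ℤ)).1 - 1 ∧ ((b:ℤ×ℤ)).2 = ((a:ℤ×ℤ)).2) ∨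
    (((b:ℤ×ℤ)).1 = ((a:ℤ×ℤ)).1 ∧ ((b:ℤ×ℤ)).2 = ((a:ℤ×ℤ)).2 + 1) ∨
    (((b:ℤ×ℤ)).1 = ((a:ℤ×ℤ)).1 ∧ ((b:ℤ×ℤ)).2 = ((a:ℤ×ℤ)).2 - 1) ∨
    (((b:ℤ×ℤ)).1 = ((a:ℤ×ℤ)).1 - 1 ∧ ((b:ℤ×ℤ)).2 = ((a:ℤ×ℤ)).2 + 1) ∨
    (((b:ℤ×ℤ)).1 = ((a:ℤ×ℤ)).1 + 1 ∧ ((b:ℤ×ℤ)).2 = ((a:ℤ×ℤ)).2 - 1)) :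
    (triLattice.induce R).Adj a b := ind_tri.mpr ((tri_adj_iff _ _).mpr h)

lemma no_tri {R : Set (ℤ × ℤ)} (htf : (triLattice.induce R).CliqueFree 3) {a b c : R}
    (hab : (triLattice.induce R).Adj a b) (hac : (triLattice.induce R).Adj a c)
    (hbc : (triLattice.induce R).Adj b c) : False :=
  htf {a, b, c} (SimpleGraph.is3Clique_triple_iff.mpr ⟨hab, hac, hbc⟩)

lemma ns_pair {R : Set (ℤ × ℤ)} (hfin : R.Finite) {u a b : R} (h : ideg R u = 2)
    (ha : (triLattice.induce R).Adj u a) (hb : (triLattice.induce R).Adj u b) (hab : a ≠ b) :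
    (triLattice.induce R).neighborSet u = {a, b} := by
  have : Finite R := hfin.to_subtype
  refine (Set.eq_of_subset_of_ncard_le ?_ ?_ (Set.toFinite _)).symm
  · intro z hz
    simp only [Set.mem_insert_iff, Set.mem_singleton_iff] at hz
    rcases hz with rfl | rfl
    exacts [ha, hb]
  · rw [Set.ncard_pair hab]
    exact le_of_eq h

lemma ncard3_le (a b c : ℤ × ℤ) : ({a, b, c} : Set (ℤ × ℤ)).ncard ≤ 3 := by
  refine le_trans (Set.ncard_insert_le _ _) ?_
  have := Set.ncard_insert_le b ({c} : Set (ℤ × ℤ))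
  simp [Set.ncard_singleton] at this ⊢
  omega

lemma ncard2_le (a b : ℤ × ℤ) : ({a, b} : Set (ℤ × ℤ)).ncard ≤ 2 := by
  have := Set.ncard_insert_le a ({b} : Set (ℤ × ℤ))
  simp [Set.ncard_singleton] at this
  omega

lemma notmem' {R : Set (ℤ × ℤ)} (z : R) {a b : ℤ} (h : (a, b) ∉ R) :
    ¬((z:ℤ×ℤ).1 = a ∧ (z:ℤ×ℤ).2 = b) := fun hc => by
  have hz : (z : ℤ×ℤ) = (a, b) := Prod.ext_iff.mpr hc
  exact h (hz ▸ z.2)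


lemma aux_h4R (R : Set (ℤ × ℤ)) (hfin : R.Finite) (htf : (triLattice.induce R).CliqueFree 3)
    (x y : ℤ) (w3 : R) (hw31 : (w3 : ℤ×ℤ).1 = x+2) (hw32 : (w3 : ℤ×ℤ).2 = y)
    (hnode3 : ideg R w3 = 3)
    (hA : ((x+1 : ℤ), y) ∉ R) (hC : ((x+2 : ℤ), y+1) ∉ R) :
    ((x+3 : ℤ), y) ∈ R := by
  have hfinR : Finite R := hfin.to_subtype
  by_contra hE
  have hsub : Subtype.val '' ((triLattice.induce R).neighborSet w3) ⊆
      {((x+1:ℤ), y+1), ((x+2:ℤ), y-1), ((x+3:ℤ), y-1)} := by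
    rintro p ⟨z, hz, rfl⟩
    have hzadj : (triLattice.induce R).Adj w3 z := hz
    have hzc := adj_coords hzadj
    have e1 := notmem' z hA
    have e2 := notmem' z hC
    have e3 := notmem' z hE
    simp only [Set.mem_insert_iff, Set.mem_singleton_iff, Prod.ext_iff]
    omega
  have heq : Subtype.val '' ((triLattice.induce R).neighborSet w3) =
      {((x+1:ℤ), y+1), ((x+2:ℤ), y-1), ((x+3:ℤ), y-1)} := by
    refine Set.eq_of_subset_of_ncard_le hsub ?_
      (((Set.finite_singleton _).insert _).insert _)
    rw [Set.ncard_image_of_injective _ Subtype.val_injective]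
    have h3' : ((triLattice.induce R).neighborSet w3).ncard = 3 := hnode3
    rw [h3']
    exact ncard3_le _ _ _
  have hm1 : ((x+2:ℤ), y-1) ∈ Subtype.val '' ((triLattice.induce R).neighborSet w3) := by
    rw [heq]; simp
  have hm2 : ((x+3:ℤ), y-1) ∈ Subtype.val '' ((triLattice.induce R).neighborSet w3) := by
    rw [heq]; simp
  obtain ⟨z1, hz1, hz1v⟩ := hm1
  obtain ⟨z2, hz2, hz2v⟩ := hm2
  have hz1adj : (triLattice.induce R).Adj w3 z1 := hz1
  have hz2adj : (triLattice.induce R).Adj w3 z2 := hz2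
  have hz11 : (z1 : ℤ×ℤ).1 = x+2 := by rw [hz1v]
  have hz12 : (z1 : ℤ×ℤ).2 = y-1 := by rw [hz1v]
  have hz21 : (z2 : ℤ×ℤ).1 = x+3 := by rw [hz2v]
  have hz22 : (z2 : ℤ×ℤ).2 = y-1 := by rw [hz2v]
  exact no_tri htf hz1adj hz2adj (mk_adj (by omega))

lemma aux_left (R : Set (ℤ × ℤ)) (hfin : R.Finite) (htf : (triLattice.induce R).CliqueFree 3)
    (x y : ℤ) (w3 v4 : R) (hw31 : (w3 : ℤ×ℤ).1 = x+2) (hw32 : (w3 : ℤ×ℤ).2 = y)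
    (hv41 : (v4 : ℤ×ℤ).1 = x+3) (hv42 : (v4 : ℤ×ℤ).2 = y)
    (hC : ((x+2 : ℤ), y+1) ∉ R) (h : ideg R v4 = 3) :
    IsLeftNode R v4 := by
  have hfinR : Finite R := hfin.to_subtype
  have hadj34 : (triLattice.induce R).Adj w3 v4 := mk_adj (by omega)
  have hD : ((x+3:ℤ), y-1) ∉ R := by
    intro hm
    exact no_tri htf (a := w3) (b := v4) (c := ⟨(x+3, y-1), hm⟩)
      hadj34 (mk_adj (by dsimp only; omega)) (mk_adj (by dsimp only; omega))
  have hF : ((x+4:ℤ), y) ∉ R := by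
    intro hm
    have hu1 : (triLattice.induce R).Adj v4 (⟨(x+4, y), hm⟩ : R) :=
      mk_adj (by dsimp only; omega)
    have hG : ((x+3:ℤ), y+1) ∉ R := by
      intro hm2
      exact no_tri htf (a := v4) (b := ⟨(x+4, y), hm⟩) (c := ⟨(x+3, y+1), hm2⟩) hu1
        (mk_adj (by dsimp only; omega)) (mk_adj (by dsimp only; omega))
    have hH : ((x+4:ℤ), y-1) ∉ R := by
      intro hm2
      exact no_tri htf (a := v4) (b := ⟨(x+4, y), hm⟩) (c := ⟨(x+4, y-1), hm2⟩) hu1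
        (mk_adj (by dsimp only; omega)) (mk_adj (by dsimp only; omega))
    have hsub : Subtype.val '' ((triLattice.induce R).neighborSet v4) ⊆
        {((x+2:ℤ), y), ((x+4:ℤ), y)} := by
      rintro p ⟨z, hz, rfl⟩
      have hzadj : (triLattice.induce R).Adj v4 z := hz
      have hzc := adj_coords hzadj
      have e1 := notmem' z hC
      have e2 := notmem' z hD
      have e3 := notmem' z hG
      have e4 := notmem' z hH
      simp only [Set.mem_insert_iff, Set.mem_singleton_iff, Prod.ext_iff]
      omega
    have hle := Set.ncard_le_ncard hsub ((Set.finite_singleton _).insert _)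
    rw [Set.ncard_image_of_injective _ Subtype.val_injective] at hle
    have h3' : ((triLattice.induce R).neighborSet v4).ncard = 3 := h
    have h2' := ncard2_le ((x+2:ℤ), y) ((x+4:ℤ), y)
    omega
  have hsub : Subtype.val '' ((triLattice.induce R).neighborSet v4) ⊆
      {((v4:ℤ×ℤ).1 - 1, (v4:ℤ×ℤ).2), ((v4:ℤ×ℤ).1, (v4:ℤ×ℤ).2 + 1),
       ((v4:ℤ×ℤ).1 + 1, (v4:ℤ×ℤ).2 - 1)} := by
    rintro p ⟨z, hz, rfl⟩
    have hzadj : (triLattice.induce R).Adj v4 z := hz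
    have hzc := adj_coords hzadj
    have e1 := notmem' z hC
    have e2 := notmem' z hD
    have e3 := notmem' z hF
    simp only [Set.mem_insert_iff, Set.mem_singleton_iff, Prod.ext_iff]
    omega
  refine Set.eq_of_subset_of_ncard_le hsub ?_
    (((Set.finite_singleton _).insert _).insert _)
  rw [Set.ncard_image_of_injective _ Subtype.val_injective]
  have h3' : ((triLattice.induce R).neighborSet v4).ncard = 3 := h
  rw [h3']
  exact ncard3_le _ _ _

set_option maxHeartbeats 1000000 in
theorem cutting_handle_length_three (R : Set (ℤ × ℤ)) (hfin : R.Finite)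
    (htf : (triLattice.induce R).CliqueFree 3)
    (hdeg : ∀ v : R, ideg R v = 2 ∨ ideg R v = 3)
    (hhandle : ∀ (m : ℕ) (w : ℕ → R), IsHandle R m w → m ≤ 3)
    (hnode : ∃ v : R, IsNode R v)
    (v : R) (hcut : IsCuttingNode R v)
    (n : ℕ) (w : ℕ → R) (hch : IsCuttingHandle R n w v) :
    n = 3 ∧ ∃ v4 : R, v4 ≠ w 2 ∧ (triLattice.induce R).Adj (w 3) v4 ∧ ideg R v4 ≤ 2 := by
  have hfinR : Finite R := hfin.to_subtype
  obtain ⟨⟨hinj, hadj, hnode0, hnoden, hdeg2⟩, h0, i, hi1, hi2, hival⟩ := hch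
  set x := (v : ℤ × ℤ).1 with hx
  set y := (v : ℤ × ℤ).2 with hy
  have hn3 : n ≤ 3 := hhandle n w ⟨hinj, hadj, hnode0, hnoden, hdeg2⟩
  have hn2 : 2 ≤ n := by omega
  have hv1 : (v : ℤ × ℤ).1 = x := hx.symm
  have hv2 : (v : ℤ × ℤ).2 = y := hy.symm
  have hwi1 : (w i : ℤ × ℤ).1 = x := by rw [hival]
  have hwi2 : (w i : ℤ × ℤ).2 = y + 1 := by rw [hival]
  have hdi : ideg R (w i) = 2 := hdeg2 i hi1 hi2
  have hpred : i - 1 + 1 = i := by omega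
  have ha1 : (triLattice.induce R).Adj (w (i-1)) (w i) := by
    have := hadj (i-1) (by omega); rwa [hpred] at this
  have ha2 : (triLattice.induce R).Adj (w i) (w (i+1)) := hadj i (by omega)
  have hne : w (i-1) ≠ w (i+1) := by
    intro h; have := hinj (i-1) (by omega) (i+1) (by omega) h; omega
  have hns := ns_pair hfin hdi ha1.symm ha2 hne
  have hadjv : (triLattice.induce R).Adj (w i) v := mk_adj (by omega)
  have hvmem : v ∈ (triLattice.induce R).neighborSet (w i) := hadjv
  rw [hns] at hvmem
  simp only [Set.mem_insert_iff, Set.mem_singleton_iff] at hvmem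
  have hieq : i = 1 := by
    rcases hvmem with h | h
    · have := hinj 0 (by omega) (i-1) (by omega) (h0.trans h)
      omega
    · have := hinj 0 (by omega) (i+1) (by omega) (h0.trans h)
      omega
  subst hieq
  clear hns hne ha1 ha2 hpred hdi
  have hA : ((x+1 : ℤ), y) ∉ R := by
    intro hm
    exact no_tri htf (a := v) (b := w 1) (c := ⟨(x+1, y), hm⟩)
      hadjv.symm (mk_adj (by dsimp only; omega)) (mk_adj (by dsimp only; omega))
  have hB : ((x-1 : ℤ), y+1) ∉ R := by
    intro hm
    exact no_tri htf (a := v) (b := w 1) (c := ⟨(x-1, y+1), hm⟩)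
      hadjv.symm (mk_adj (by dsimp only; omega)) (mk_adj (by dsimp only; omega))
  have haw2 : (triLattice.induce R).Adj (w 1) (w 2) := hadj 1 (by omega)
  have hD2 := adj_coords haw2
  have hw2nv : ¬((w 2 : ℤ×ℤ).1 = x ∧ (w 2 : ℤ×ℤ).2 = y) := by
    intro hc
    have hveq : w 2 = v := Subtype.ext (Prod.ext_iff.mpr ⟨hc.1.trans hv1.symm, hc.2.trans hv2.symm⟩)
    have := hinj 2 (by omega) 0 (by omega) (hveq.trans h0.symm)
    omega
  have hnA2 := notmem' (w 2) hA
  have hnB2 := notmem' (w 2) hB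
  have hw2cases : ((w 2 : ℤ×ℤ).1 = x+1 ∧ (w 2 : ℤ×ℤ).2 = y+1) ∨
      ((w 2 : ℤ×ℤ).1 = x ∧ (w 2 : ℤ×ℤ).2 = y+2) ∨
      ((w 2 : ℤ×ℤ).1 = x-1 ∧ (w 2 : ℤ×ℤ).2 = y+2) := by omega
  clear hD2 hw2nv hnA2 hnB2 hB
  have hw2deg : ideg R (w 2) = 2 := by
    rcases hdeg (w 2) with h | h
    · exact h
    · exfalso
      have := hcut.2.1 (w 2) h
      omega
  have hn : n = 3 := by
    by_contra hne3
    have h2 : n = 2 := by omega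
    have h3 : ideg R (w 2) = 3 := by
      have hh := hnoden
      rw [h2] at hh
      exact hh
    omega
  subst hn
  refine ⟨rfl, ?_⟩
  have hnode3 : ideg R (w 3) = 3 := hnoden
  have h3le : (w 3 : ℤ×ℤ).2 ≤ y := hcut.2.1 (w 3) hnode3
  have haw3 : (triLattice.induce R).Adj (w 2) (w 3) := hadj 2 (by omega)
  have hD3 := adj_coords haw3
  have hnA3 := notmem' (w 3) hA
  have hkey : ((w 2 : ℤ×ℤ).1 = x+1 ∧ (w 2 : ℤ×ℤ).2 = y+1) ∧
      ((w 3 : ℤ×ℤ).1 = x+2 ∧ (w 3 : ℤ×ℤ).2 = y) := by omega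
  obtain ⟨⟨hw21, hw22⟩, hw31, hw32⟩ := hkey
  clear hD3 hnA3 hw2cases h3le
  have hC : ((x+2 : ℤ), y+1) ∉ R := by
    intro hm
    exact no_tri htf (a := w 2) (b := w 3) (c := ⟨(x+2, y+1), hm⟩)
      haw3 (mk_adj (by dsimp only; omega)) (mk_adj (by dsimp only; omega))
  have h4R : ((x+3 : ℤ), y) ∈ R := aux_h4R R hfin htf x y (w 3) hw31 hw32 hnode3 hA hC
  refine ⟨⟨((x+3:ℤ), y), h4R⟩, ?_, ?_, ?_⟩
  · intro hcontra
    have h2 : ((⟨((x+3:ℤ), y), h4R⟩ : R) : ℤ×ℤ).2 = (w 2 : ℤ×ℤ).2 := by rw [hcontra]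
    have h2' : ((⟨((x+3:ℤ), y), h4R⟩ : R) : ℤ×ℤ).2 = y := rfl
    omega
  · exact mk_adj (by dsimp only; omega)
  · rcases hdeg (⟨((x+3:ℤ), y), h4R⟩ : R) with h | h
    · exact le_of_eq h
    · exfalso
      have hleft : IsLeftNode R (⟨((x+3:ℤ), y), h4R⟩ : R) :=
        aux_left R hfin htf x y (w 3) _ hw31 hw32 rfl rfl hC h
      have hfin2 := hcut.2.2 (⟨((x+3:ℤ), y), h4R⟩ : R) hleft rfl
      have : ((⟨((x+3:ℤ), y), h4R⟩ : R) : ℤ×ℤ).1 = x+3 := rfl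
      omega
end

section
/- Let P be the path v_0,...,v_n, b,e positive integers with a = 2b+e, and L a 1-reduced list. Define D ⊆ L(n) \ L(n−1) with |D| = b−e (assuming b ≥ e), L'(i) = L(i) for i < n, L'(n) = L(n) \ D, ω'(i) = b for i < n and ω'(n) = e. If P is (L',ω')-choosable then P is (L,b)-choosable. -/
theorem reduce_last_vertex (n a b e : ℕ) (hb : 0 < b) (he : 0 < e) (hbe : e ≤ b)
    (ha : a = 2 * b + e) (L : ℕ → Finset ℕ)
    (h0 : (L 0).card = b)
    (hmid : ∀ i, 1 ≤ i → i ≤ n - 2 → (L i).card = a)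
    (hn1 : (L (n - 1)).card = b + e) (hn : (L n).card = b + e)
    (hamp : (L (n - 1) ∪ L n).card ≥ 2 * b)
    (D : Finset ℕ) (hD : D ⊆ L n \ L (n - 1)) (hDcard : D.card = b - e)
    (h : PathChoosable n (fun i => if i < n then L i else L n \ D)
      (fun i => if i < n then b else e)) :
    PathChoosable n L (fun _ => b) := by
  obtain ⟨c', hc', hdisj⟩ := h
  refine ⟨fun i => if i = n then c' n ∪ D else c' i, ?_, ?_⟩
  · intro i hi
    by_cases hin : i = n
    · rw [hin]
      simp only [if_pos rfl, if_true]
      obtain ⟨hsub, hcard⟩ := hc' n le_rfl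
      simp only [lt_irrefl, if_false] at hsub hcard
      have hDn : D ⊆ L n := hD.trans (Finset.sdiff_subset)
      have hdisjD : Disjoint (c' n) D := by
        have := hsub.trans (Finset.sdiff_subset (s := L n) (t := D))
        exact Finset.disjoint_right.mpr fun x hxD hxc =>
          (Finset.mem_sdiff.mp (hsub hxc)).2 hxD
      constructor
      · exact Finset.union_subset (hsub.trans Finset.sdiff_subset) hDn
      · rw [Finset.card_union_of_disjoint hdisjD, hcard, hDcard]
        omega
    · have hlt : i < n := lt_of_le_of_ne hi hin
      obtain ⟨hsub, hcard⟩ := hc' i hi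
      simp only [if_pos hlt] at hsub hcard
      simp only [if_neg hin]
      exact ⟨hsub, hcard⟩
  · intro i hi
    have hin : i ≠ n := Nat.ne_of_lt hi
    simp only [if_neg hin]
    by_cases h1 : i + 1 = n
    · simp only [if_pos h1]
      have hdn : Disjoint (c' i) (c' (i+1)) := hdisj i hi
      rw [h1] at hdn
      refine Finset.disjoint_union_right.mpr ⟨hdn, ?_⟩
      -- c' i ⊆ L i = L (n-1), D disjoint from L (n-1)
      obtain ⟨hsub, _⟩ := hc' i (le_of_lt hi)
      simp only [if_pos hi] at hsub
      have hieq : i = n - 1 := by omega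
      refine Finset.disjoint_left.mpr fun x hxc hxD => ?_
      have := (Finset.mem_sdiff.mp (hD hxD)).2
      rw [← hieq] at this
      exact this (hsub hxc)
    · simp only [if_neg h1]
      exact hdisj i hi
end

section
/- Let L be a waterfall list on indices 0,...,n with |L(0)| = b, |L(i)| = 2b+e for 1 ≤ i ≤ n−2, |L(n−1)| = b+e, |L(n)| = 2e, where n = Even(2b/e) is even. Then for every j ∈ {0,...,n}: |⋃_{k=0}^{j} L(k)| ≥ (j+1)b if j ≤ n−2, |⋃_{k=0}^{n−1} L(k)| ≥ nb, and |⋃_{k=0}^{n} L(k)| ≥ nb + e. -/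
/-! Sets whose indices have the parity of `j` are pairwise disjoint, so the union of
`L 0, …, L j` has at least the sum of their sizes. Every middle set has at least `2b` elements,
which gives `(j + 1) b`; at `j = n - 1` and `j = n` the shortfall of the end sets is covered by
the `n / 2` surplus terms `e`, as `(n / 2) e ≥ b`. -/

open Finset

theorem even_evenCeil (b e : ℕ) : Even (evenCeil b e) := even_two_mul _

theorem evenCeil_pos {b e : ℕ} (hb : 0 < b) (he : 0 < e) : 0 < evenCeil b e :=
  Nat.mul_pos two_pos (Nat.div_pos (by omega) he)

theorem two_mul_le_evenCeil_mul (b : ℕ) {e : ℕ} (he : 0 < e) : 2 * b ≤ evenCeil b e * e := by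
  have := Nat.lt_div_mul_add (a := b + e - 1) he
  unfold evenCeil
  rw [mul_assoc]
  omega

theorem mul_le_sum_range {f : ℕ → ℕ} {m c : ℕ} (h : ∀ k < m, c ≤ f k) :
    m * c ≤ ∑ k ∈ range m, f k := by
  simpa using card_nsmul_le_sum (range m) f c fun k hk => h k (mem_range.1 hk)

theorem Waterfall.sum_card_le_card_biUnion {n : ℕ} {L : ℕ → Finset ℕ} (hw : Waterfall n L)
    {j m r : ℕ} (hj : j ≤ n) (hm : 2 * m + r ≤ j + 2) :
    ∑ k ∈ range m, #(L (2 * k + r)) ≤ #((Icc 0 j).biUnion L) := by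
  have hdisj : (range m : Set ℕ).PairwiseDisjoint fun k => L (2 * k + r) := by
    intro k hk k' hk' hne
    simp only [coe_range, Set.mem_Iio] at hk hk'
    rcases hne.lt_or_gt with h | h
    · exact hw _ (by omega) _ (by omega) (by omega)
    · exact (hw _ (by omega) _ (by omega) (by omega)).symm
  rw [← card_biUnion hdisj]
  refine card_le_card (biUnion_subset.2 fun k hk => subset_biUnion_of_mem L ?_)
  simp only [mem_range] at hk
  exact mem_Icc.2 ⟨Nat.zero_le _, by omega⟩

theorem Waterfall.succ_mul_le_card_biUnion {n b j : ℕ} {L : ℕ → Finset ℕ} (hw : Waterfall n L)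
    (h0 : b ≤ #(L 0)) (hmid : ∀ i, 1 ≤ i → i ≤ n - 2 → 2 * b ≤ #(L i)) (hj : j ≤ n - 2) :
    (j + 1) * b ≤ #((Icc 0 j).biUnion L) := by
  rcases Nat.even_or_odd' j with ⟨t, rfl | rfl⟩
  · have hsum := hw.sum_card_le_card_biUnion (j := 2 * t) (m := t + 1) (r := 0)
      (by omega) le_rfl
    rw [sum_range_succ', mul_zero] at hsum
    have := mul_le_sum_range (m := t) (c := 2 * b) (f := fun k => #(L (2 * (k + 1) + 0)))
      fun k hk => hmid _ (by omega) (by omega)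
    nlinarith
  · have hsum := hw.sum_card_le_card_biUnion (j := 2 * t + 1) (m := t + 1) (r := 1)
      (by omega) le_rfl
    have := mul_le_sum_range (m := t + 1) (c := 2 * b) (f := fun k => #(L (2 * k + 1)))
      fun k hk => hmid _ (by omega) (by omega)
    nlinarith

theorem Waterfall.mul_le_card_biUnion_sub_one {n b e : ℕ} {L : ℕ → Finset ℕ}
    (hw : Waterfall n L) (hn : Even n) (hpos : 0 < n) (hbn : 2 * b ≤ n * e)
    (hmid : ∀ i, 1 ≤ i → i ≤ n - 2 → 2 * b + e ≤ #(L i)) (hn1 : b + e ≤ #(L (n - 1))) :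
    n * b ≤ #((Icc 0 (n - 1)).biUnion L) := by
  obtain ⟨u, rfl⟩ : ∃ u, n = 2 * u + 2 := by obtain ⟨s, rfl⟩ := hn; exact ⟨s - 1, by omega⟩
  have hsum := hw.sum_card_le_card_biUnion (j := 2 * u + 2 - 1) (m := u + 1) (r := 1)
    (by omega) (by omega)
  rw [sum_range_succ, show 2 * u + 1 = 2 * u + 2 - 1 by omega] at hsum
  have := mul_le_sum_range (m := u) (c := 2 * b + e) (f := fun k => #(L (2 * k + 1)))
    fun k hk => hmid _ (by omega) (by omega)
  nlinarith

theorem Waterfall.mul_add_le_card_biUnion {n b e : ℕ} {L : ℕ → Finset ℕ}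
    (hw : Waterfall n L) (hn : Even n) (hpos : 0 < n) (hbn : 2 * b ≤ n * e)
    (h0 : b ≤ #(L 0)) (hmid : ∀ i, 1 ≤ i → i ≤ n - 2 → 2 * b + e ≤ #(L i))
    (hlast : 2 * e ≤ #(L n)) :
    n * b + e ≤ #((Icc 0 n).biUnion L) := by
  obtain ⟨u, rfl⟩ : ∃ u, n = 2 * u + 2 := by obtain ⟨s, rfl⟩ := hn; exact ⟨s - 1, by omega⟩
  have hsum := hw.sum_card_le_card_biUnion (m := u + 2) (r := 0) le_rfl (by omega)
  rw [sum_range_succ, sum_range_succ', mul_zero, add_zero, add_zero, mul_add, mul_one] at hsum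
  have := mul_le_sum_range (m := u) (c := 2 * b + e) (f := fun k => #(L (2 * (k + 1) + 0)))
    fun k hk => hmid _ (by omega) (by omega)
  nlinarith

theorem amplitude_bounds_for_modified_list (n b e : ℕ) (hb : 0 < b) (he : 0 < e)
    (hn : n = evenCeil b e) (L : ℕ → Finset ℕ) (hw : Waterfall n L)
    (h0 : (L 0).card = b)
    (hmid : ∀ i, 1 ≤ i → i ≤ n - 2 → (L i).card = 2 * b + e)
    (hn1 : (L (n - 1)).card = b + e) (hlast : (L n).card = 2 * e) :
    (∀ j ≤ n - 2, ((Finset.Icc 0 j).biUnion L).card ≥ (j + 1) * b) ∧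
    ((Finset.Icc 0 (n - 1)).biUnion L).card ≥ n * b ∧
    ((Finset.Icc 0 n).biUnion L).card ≥ n * b + e := by
  subst hn
  have heven := even_evenCeil b e
  have hpos := evenCeil_pos hb he
  have hbn := two_mul_le_evenCeil_mul b he
  have hmid' i h1 h2 : 2 * b + e ≤ #(L i) := (hmid i h1 h2).ge
  refine ⟨fun j hj => hw.succ_mul_le_card_biUnion h0.ge
      (fun i h1 h2 => (Nat.le_add_right _ _).trans (hmid' i h1 h2)) hj,
    hw.mul_le_card_biUnion_sub_one heven hpos hbn hmid' hn1.ge,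
    hw.mul_add_le_card_biUnion heven hpos hbn h0.ge hmid' hlast.ge⟩
end
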